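/- arXiv:2306.03266 — 5 statements merged into one kernel-verified Lean document; each statement's English description precedes it below -/
import Mathlib

section
/- Let k ≥ 2, t ≥ 1 and n ∈ ℕ with t ≥ n − k. If G and H are colored graphs each with at most n vertices and the (k,t)-FWL color histograms of G and H are equal, then G and H are isomorphic as colored graphs. In other words, (k,t)-FWL solves the graph isomorphism problem for graphs of size at most n. -/
/-!
Common formalization of colored graphs, the k-dimensional Weisfeiler-Lehman (WL) test,
the (k,t)-dimensional Folklore WL test (k,t)-FWL and its extension (k,t)-FWL+, together
with the various specific refinement procedures (δ-k-LWL, GraphSNN, edge-based subgraph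
refinement, KP-GNN, GDGNN, SLFWL(2), N²-FWL).

Convention: all colorings are formalized as explicitly-valued nested data (an injective
HASH is the identity).  "The stable colors (resp. color histograms) are equal" is rendered
as "the colors (resp. color histograms) at every iteration l are equal"; since the colors
at iteration l determine those at every earlier iteration and the partitions stabilize on
finite graphs, this is equivalent to equality of the stable colors.
-/

open Finset

noncomputable section

/-- A finite colored, undirected, simple graph. -/
structure ColoredGraph (C : Type) where
  V : Type
  fintypeV : Fintype V
  decEqV : DecidableEq V
  adj : V → V → Prop
  symm : ∀ u v, adj u v → adj v u
  loopless : ∀ v, ¬ adj v v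
  color : V → C

attribute [instance] ColoredGraph.fintypeV ColoredGraph.decEqV

/-- The data recording the isomorphism type of a `k`-tuple of vertices: the colors of the
entries, the equalities among entries, and the adjacencies among entries. -/
abbrev IsoType (C : Type) (k : ℕ) : Type :=
  (Fin k → C) × (Fin k → Fin k → Prop) × (Fin k → Fin k → Prop)

namespace ColoredGraph

variable {C : Type}

/-- The isomorphism type of a `k`-tuple of vertices.  Two tuples (possibly in different
graphs) have the same isomorphism type iff these values are equal. -/
def isoType (G : ColoredGraph C) {k : ℕ} (v : Fin k → G.V) : IsoType C k :=
  (fun i => G.color (v i), fun i j => v i = v j, fun i j => G.adj (v i) (v j))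

/-- The underlying simple graph. -/
def toSimple (G : ColoredGraph C) : SimpleGraph G.V where
  Adj := G.adj
  symm := ⟨fun u v h => G.symm u v h⟩
  loopless := ⟨fun v h => G.loopless v h⟩

/-- `Q₁(v)`: the set of neighbors of `v`. -/
def nbhd (G : ColoredGraph C) (v : G.V) : Finset G.V :=
  @Finset.filter _ (fun u => G.adj v u) (Classical.decPred _) Finset.univ

/-- `N₁(v)`: the closed neighborhood of `v`. -/
def closedNbhd (G : ColoredGraph C) (v : G.V) : Finset G.V :=
  @Finset.filter _ (fun u => u = v ∨ G.adj v u) (Classical.decPred _) Finset.univ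

/-- `N_h(v)`: the set of vertices within `h` hops of `v` (including `v`). -/
def ball (G : ColoredGraph C) (h : ℕ) (v : G.V) : Finset G.V :=
  @Finset.filter _ (fun u => ∃ p : G.toSimple.Walk v u, p.length ≤ h)
    (Classical.decPred _) Finset.univ

/-- `Q_d(v)`: the set of vertices at shortest-path distance exactly `d` from `v`. -/
def sphere (G : ColoredGraph C) (d : ℕ) (v : G.V) : Finset G.V :=
  @Finset.filter _ (fun u => G.toSimple.Reachable v u ∧ G.toSimple.dist v u = d)
    (Classical.decPred _) Finset.univ

/-- `SP(v₁,v₂)`: the set of vertices lying on shortest paths between `v₁` and `v₂`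
(with `SP(v,v) = {v}`). -/
def spSet (G : ColoredGraph C) (v₁ v₂ : G.V) : Finset G.V :=
  if v₁ = v₂ then {v₁}
  else
    @Finset.filter _
      (fun w => G.toSimple.Reachable v₁ w ∧ G.toSimple.Reachable w v₂ ∧
        G.toSimple.dist v₁ w + G.toSimple.dist w v₂ = G.toSimple.dist v₁ v₂)
      (Classical.decPred _) Finset.univ

/-- Isomorphism of colored graphs. -/
def Isomorphic (G H : ColoredGraph C) : Prop :=
  ∃ φ : G.V ≃ H.V,
    (∀ u v : G.V, G.adj u v ↔ H.adj (φ u) (φ v)) ∧ ∀ v : G.V, H.color (φ v) = G.color v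

end ColoredGraph

variable {C : Type}

/-- The type of `t`-fold nested (hierarchical) multisets over `α`. -/
def HMS (α : Type) : ℕ → Type
  | 0 => α
  | t + 1 => Multiset (HMS α t)

/-- The hierarchical multiset `{{x(w) : w ∈ S₁ × … × S_t}}_t`, grouped so that the
innermost multiset ranges over the first coordinate and the outermost over the last. -/
def hms {V α : Type} : (t : ℕ) → (Fin t → Finset V) → ((Fin t → V) → α) → HMS α t
  | 0, _, x => x finZeroElim
  | t + 1, S, x =>
      (S (Fin.last t)).val.map fun wl =>
        hms t (fun i => S i.castSucc) fun w => x (Fin.snoc w wl)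

/-- Replace the entries of `v` at the given indices by the given values. -/
def replaceList {V : Type} {k : ℕ} (v : Fin k → V) : List (Fin k × V) → (Fin k → V)
  | [] => v
  | p :: ps => Function.update (replaceList v ps) p.1 p.2

/-- The neighborhood tuple `Q^F_w(v)` of a `k`-tuple `v` with respect to a `t`-tuple `w`:
for each `m = 0, 1, …, min k t`, every `m`-subtuple of `w` (index sets in the fixed order
given by `List.sublistsLen`) is substituted into `v` at every increasing tuple of `m`
positions (in the fixed order given by `List.sublistsLen`), and all resulting `k`-tuples
are concatenated in this fixed order (for `m = 0` this contributes `v` itself). -/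
def nbhdTuple {V : Type} (k t : ℕ) (v : Fin k → V) (w : Fin t → V) : List (Fin k → V) :=
  (List.range (min k t + 1)).flatMap fun m =>
    ((List.finRange t).sublistsLen m).flatMap fun ws =>
      ((List.finRange k).sublistsLen m).map fun js =>
        replaceList v (js.zip (ws.map w))

/-! ### The k-WL colorings -/

/-- The type of `k`-WL colors at iteration `l`. -/
def WLColor (C : Type) (k : ℕ) : ℕ → Type
  | 0 => IsoType C k
  | l + 1 => WLColor C k l × (Fin k → Multiset (WLColor C k l))

/-- The `k`-WL coloring of `k`-tuples at iteration `l`. -/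
def wlColor (G : ColoredGraph C) (k : ℕ) : (l : ℕ) → (Fin k → G.V) → WLColor C k l
  | 0, v => G.isoType v
  | l + 1, v =>
      (wlColor G k l v,
        fun j => Finset.univ.val.map fun w => wlColor G k l (Function.update v j w))

/-- The `k`-WL color histogram of `G` at iteration `l`. -/
def wlHistogram (G : ColoredGraph C) (k l : ℕ) : Multiset (WLColor C k l) :=
  Finset.univ.val.map fun v => wlColor G k l v

/-! ### The (k,t)-FWL and (k,t)-FWL+ colorings -/

/-- The type of `(k,t)`-FWL(+) colors at iteration `l` (hierarchical multiset version). -/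
def FWLColor (C : Type) (k t : ℕ) : ℕ → Type
  | 0 => IsoType C k
  | l + 1 => FWLColor C k t l × HMS (List (FWLColor C k t l)) t

/-- The `(k,t)`-FWL+ coloring with the equivariant set `ES` given coordinatewise
(so that `w` ranges over `ES v 0 × … × ES v (t-1)`, aggregated hierarchically). -/
def fwlpColor (G : ColoredGraph C) (k t : ℕ) (ES : (Fin k → G.V) → Fin t → Finset G.V) :
    (l : ℕ) → (Fin k → G.V) → FWLColor C k t l
  | 0, v => G.isoType v
  | l + 1, v =>
      (fwlpColor G k t ES l v,
        hms t (ES v) fun w => (nbhdTuple k t v w).map fun u => fwlpColor G k t ES l u)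

/-- The `(k,t)`-FWL coloring (all coordinates of `w` range over all vertices). -/
def fwlColor (G : ColoredGraph C) (k t : ℕ) : (l : ℕ) → (Fin k → G.V) → FWLColor C k t l :=
  fwlpColor G k t fun _ _ => Finset.univ

/-- The `(k,t)`-FWL color histogram of `G` at iteration `l`. -/
def fwlHistogram (G : ColoredGraph C) (k t l : ℕ) : Multiset (FWLColor C k t l) :=
  Finset.univ.val.map fun v => fwlColor G k t l v

/-- The extended `(k,t)`-FWL color of a `(k+t)`-tuple `p = (v, w)`:
`C^{l+1}(p) = (C^l(u) : u ∈ Q^F_w(v))`, recorded here at level `l`. -/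
def fwlExtColor (G : ColoredGraph C) (k t l : ℕ) (v : Fin k → G.V) (w : Fin t → G.V) :
    List (FWLColor C k t l) :=
  (nbhdTuple k t v w).map fun u => fwlColor G k t l u

/-- The type of `(k,t)`-FWL+ colors at iteration `l` (plain multiset version). -/
def FWLPlainColor (C : Type) (k : ℕ) : ℕ → Type
  | 0 => IsoType C k
  | l + 1 => FWLPlainColor C k l × Multiset (List (FWLPlainColor C k l))

/-- The `(k,t)`-FWL+ coloring with equivariant set `ES` given coordinatewise, aggregated
as a plain multiset over `ES v 0 × … × ES v (t-1)`. -/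
def fwlpPlainColor (G : ColoredGraph C) (k t : ℕ)
    (ES : (Fin k → G.V) → Fin t → Finset G.V) :
    (l : ℕ) → (Fin k → G.V) → FWLPlainColor C k l
  | 0, v => G.isoType v
  | l + 1, v =>
      (fwlpPlainColor G k t ES l v,
        (Fintype.piFinset (ES v)).val.map fun w =>
          (nbhdTuple k t v w).map fun u => fwlpPlainColor G k t ES l u)

/-! ### δ-k-LWL -/

/-- The δ-k-LWL coloring. -/
def dklwlColor (G : ColoredGraph C) (k : ℕ) : (l : ℕ) → (Fin k → G.V) → WLColor C k l
  | 0, v => G.isoType v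
  | l + 1, v =>
      (dklwlColor G k l v,
        fun j => (G.nbhd (v j)).val.map fun w => dklwlColor G k l (Function.update v j w))

/-! ### SLFWL(2) -/

/-- The type of SLFWL(2) colors at iteration `l`. -/
def SLColor (C : Type) : ℕ → Type
  | 0 => IsoType C 2
  | l + 1 => SLColor C l × Multiset (SLColor C l × SLColor C l)

/-- The SLFWL(2) coloring of pairs of vertices. -/
def slColor (G : ColoredGraph C) : (l : ℕ) → G.V → G.V → SLColor C l
  | 0, v₁, v₂ => G.isoType ![v₁, v₂]
  | l + 1, v₁, v₂ =>
      (slColor G l v₁ v₂,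
        (G.closedNbhd v₁ ∪ G.closedNbhd v₂).val.map fun w =>
          (slColor G l v₁ w, slColor G l w v₂))

/-! ### The edge-based subgraph refinement (as in I²-GNN) -/

/-- The type of edge-based subgraph refinement colors at iteration `l`. -/
def EdgeColor (C : Type) : ℕ → Type
  | 0 => C × Prop × Prop
  | l + 1 => EdgeColor C l × Multiset (EdgeColor C l)

/-- The edge-based subgraph refinement: the color of `v₂` in the subgraph rooted at the
edge `(v₁, w₂)`; the initial color is `l_G(v₂)` together with markers for `v₂ = v₁` and
`v₂ = w₂`. -/
def edgeColor (G : ColoredGraph C) : (l : ℕ) → G.V → G.V → G.V → EdgeColor C l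
  | 0, v₁, v₂, w₂ => (G.color v₂, v₂ = v₁, v₂ = w₂)
  | l + 1, v₁, v₂, w₂ =>
      (edgeColor G l v₁ v₂ w₂, (G.nbhd v₂).val.map fun w₁ => edgeColor G l v₁ w₁ w₂)

/-- The graph color histogram of the edge-based subgraph refinement at iteration `l`:
`{{ {{ {{ C(v₁,v₂,w₂) : v₂ ∈ V }} : w₂ ∈ Q₁(v₁) }} : v₁ ∈ V }}`. -/
def edgeHistogram (G : ColoredGraph C) (l : ℕ) :
    Multiset (Multiset (Multiset (EdgeColor C l))) :=
  Finset.univ.val.map fun v₁ =>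
    (G.nbhd v₁).val.map fun w₂ => Finset.univ.val.map fun v₂ => edgeColor G l v₁ v₂ w₂

/-! ### GraphSNN -/

/-- `V_{v₁v₂}`: the vertex set of the overlapping 1-hop subgraph between `v₁` and `v₂`. -/
def snnOverlapVerts (G : ColoredGraph C) (v₁ v₂ : G.V) : Finset G.V :=
  G.closedNbhd v₁ ∩ G.closedNbhd v₂

/-- `|E_{v₁v₂}|`: the number of edges of `G` with both endpoints in `V_{v₁v₂}`
(ordered adjacent pairs counted once, i.e. divided by two). -/
def snnEdgeCount (G : ColoredGraph C) (v₁ v₂ : G.V) : ℝ :=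
  ((@Finset.filter (G.V × G.V)
      (fun p => p.1 ∈ snnOverlapVerts G v₁ v₂ ∧ p.2 ∈ snnOverlapVerts G v₁ v₂ ∧
        G.adj p.1 p.2)
      (Classical.decPred _) Finset.univ).card : ℝ) / 2

/-- The GraphSNN structural value `|E_{v₁v₂}|·|V_{v₁v₂}|^λ / (|V_{v₁v₂}|·(|V_{v₁v₂}|−1))`. -/
def snnVal (G : ColoredGraph C) (lam : ℝ) (v₁ v₂ : G.V) : ℝ :=
  (snnEdgeCount G v₁ v₂ * ((snnOverlapVerts G v₁ v₂).card : ℝ) ^ lam) /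
    (((snnOverlapVerts G v₁ v₂).card : ℝ) * (((snnOverlapVerts G v₁ v₂).card : ℝ) - 1))

/-- The type of GraphSNN colors at iteration `l`. -/
def SNNColor (C : Type) : ℕ → Type
  | 0 => IsoType C 2 ⊕ ℝ
  | l + 1 => (SNNColor C l × Multiset (SNNColor C l × SNNColor C l)) ⊕ ℝ

/-- The GraphSNN refinement: off-diagonal pairs get the fixed color `snnVal`; diagonal
pairs are refined iteratively. -/
def snnColor (G : ColoredGraph C) (lam : ℝ) : (l : ℕ) → G.V → G.V → SNNColor C l
  | 0, v₁, v₂ =>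
      if v₁ = v₂ then Sum.inl (G.isoType ![v₁, v₂]) else Sum.inr (snnVal G lam v₁ v₂)
  | l + 1, v₁, v₂ =>
      if v₁ = v₂ then
        Sum.inl (snnColor G lam l v₁ v₂,
          (G.nbhd v₁).val.map fun w => (snnColor G lam l v₁ w, snnColor G lam l w w))
      else Sum.inr (snnVal G lam v₁ v₂)

/-! ### KP-GNN (shortest-path-distance kernel, peripheral encoder as powerful as 1-WL) -/

/-- The type of KP-GNN colors at iteration `l`. -/
def KPColor (C : Type) : ℕ → Type
  | 0 => IsoType C 2 × ℕ
  | l + 1 => KPColor C l × (Multiset (KPColor C l × KPColor C l) ⊕ Multiset (KPColor C l))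

/-- The KP-GNN refinement of pairs of vertices. -/
def kpColor (G : ColoredGraph C) : (l : ℕ) → G.V → G.V → KPColor C l
  | 0, v₁, v₂ => (G.isoType ![v₁, v₂], G.toSimple.dist v₁ v₂)
  | l + 1, v₁, v₂ =>
      (kpColor G l v₁ v₂,
        if v₁ = v₂ then
          Sum.inl (Finset.univ.val.map fun w => (kpColor G l w w, kpColor G l v₁ w))
        else
          Sum.inr ((G.sphere (G.toSimple.dist v₁ v₂) v₁ ∩ G.nbhd v₂).val.map fun w =>
            kpColor G l v₁ w))

/-- The type of colors of the (2,1)-FWL+ instance corresponding to KP-GNN. -/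
def KPFColor (C : Type) : ℕ → Type
  | 0 => IsoType C 2 × ℕ
  | l + 1 => KPFColor C l × Multiset (KPFColor C l)

/-- The (2,1)-FWL+ instance with `ES(v₁,v₂) = Q_{SPD(v₁,v₂)}(v₁) ∩ Q₁(v₂)` and initial
color the isomorphism type together with `SPD(v₁,v₂)`. -/
def kpfColor (G : ColoredGraph C) : (l : ℕ) → G.V → G.V → KPFColor C l
  | 0, v₁, v₂ => (G.isoType ![v₁, v₂], G.toSimple.dist v₁ v₂)
  | l + 1, v₁, v₂ =>
      (kpfColor G l v₁ v₂,
        (G.sphere (G.toSimple.dist v₁ v₂) v₁ ∩ G.nbhd v₂).val.map fun w => kpfColor G l v₁ w)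

/-! ### GDGNN -/

/-- The type of GDGNN colors at iteration `l`. -/
def GDColor (C : Type) : ℕ → Type
  | 0 => IsoType C 2
  | l + 1 => GDColor C l × Multiset (GDColor C l) × Multiset (GDColor C l)

/-- The GDGNN refinement of pairs of vertices. -/
def gdColor (G : ColoredGraph C) : (l : ℕ) → G.V → G.V → GDColor C l
  | 0, v₁, v₂ => G.isoType ![v₁, v₂]
  | l + 1, v₁, v₂ =>
      (gdColor G l v₁ v₂,
        (G.nbhd v₂).val.map fun w => gdColor G l v₁ w,
        (G.spSet v₁ v₂).val.map fun w => gdColor G l v₁ w)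

/-! ### N²-FWL -/

/-- The coordinatewise neighborhood of N²-FWL with hop parameter `h`:
`N²(v₁,v₂) = (N₁(v₂) × N₁(v₁)) ∩ (N_h(v₁) ∩ N_h(v₂))²`, written as a product. -/
def n2ES (G : ColoredGraph C) (h : ℕ) (v : Fin 2 → G.V) : Fin 2 → Finset G.V :=
  ![G.closedNbhd (v 1) ∩ G.ball h (v 0) ∩ G.ball h (v 1),
    G.closedNbhd (v 0) ∩ G.ball h (v 0) ∩ G.ball h (v 1)]

/-- The N²-FWL coloring with hop parameter `h`:
the (2,2)-FWL+ instance with neighborhood `N²(v₁,v₂)`. -/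
def n2Color (G : ColoredGraph C) (h : ℕ) : (l : ℕ) → (Fin 2 → G.V) → FWLColor C 2 2 l :=
  fwlpColor G 2 2 (n2ES G h)

end


/-! ### Auxiliary material for Statement 0 -/

namespace FWLAux

open List

/-- The "template" of index pairs underlying `nbhdTuple`. -/
def tmpl (k t : ℕ) : List (List (Fin k × Fin t)) :=
  (List.range (min k t + 1)).flatMap fun m =>
    ((List.finRange t).sublistsLen m).flatMap fun ws =>
      ((List.finRange k).sublistsLen m).map fun js => js.zip ws

/-- Substituting entries of `w` into `v` according to a list of index pairs. -/
def subst {V : Type} {k t : ℕ} (v : Fin k → V) (w : Fin t → V)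
    (ps : List (Fin k × Fin t)) : Fin k → V :=
  replaceList v (ps.map fun p => (p.1, w p.2))

lemma nbhdTuple_eq {V : Type} (k t : ℕ) (v : Fin k → V) (w : Fin t → V) :
    nbhdTuple k t v w = (tmpl k t).map (subst v w) := by
  unfold nbhdTuple tmpl
  rw [List.map_flatMap]
  congr 1; funext m
  rw [List.map_flatMap]
  congr 1; funext ws
  rw [List.map_map]
  congr 1; funext js
  simp only [Function.comp, subst]
  congr 1
  rw [List.zip_map_right]
  congr 1

lemma pair_sublist_finRange {t : ℕ} {a b : Fin t} (h : a < b) :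
    [a, b] <+ List.finRange t := by
  have hnd : ([a, b] : List (Fin t)).Nodup := by
    simp [List.nodup_cons, h.ne]
  have hs : [a, b] <+~ List.finRange t :=
    hnd.subperm fun x _ => List.mem_finRange x
  have h2 := List.pair_sublist_insertionSort' (r := (· ≤ ·)) h.le hs
  rwa [List.Pairwise.insertionSort_eq (List.pairwise_le_finRange t)] at h2

lemma mem_tmpl_single {k t : ℕ} (hk : 1 ≤ k) (ht : 1 ≤ t) (j : Fin k) (i : Fin t) :
    [(j, i)] ∈ tmpl k t := by
  unfold tmpl
  rw [List.mem_flatMap]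
  refine ⟨1, by rw [List.mem_range]; omega, ?_⟩
  rw [List.mem_flatMap]
  refine ⟨[i], List.mem_sublistsLen.2
    ⟨List.singleton_sublist.2 (List.mem_finRange i), rfl⟩, ?_⟩
  exact List.mem_map.2 ⟨[j], List.mem_sublistsLen.2
    ⟨List.singleton_sublist.2 (List.mem_finRange j), rfl⟩, rfl⟩

lemma mem_tmpl_pair {k t : ℕ} {j1 j2 : Fin k} {i1 i2 : Fin t}
    (hj : j1 < j2) (hi : i1 < i2) :
    [(j1, i1), (j2, i2)] ∈ tmpl k t := by
  have hkt : 2 ≤ min k t := by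
    have h1 := j2.isLt; have h2 := i2.isLt
    have h3 : (j1 : ℕ) < j2 := hj
    have h4 : (i1 : ℕ) < i2 := hi
    omega
  unfold tmpl
  rw [List.mem_flatMap]
  refine ⟨2, by rw [List.mem_range]; omega, ?_⟩
  rw [List.mem_flatMap]
  refine ⟨[i1, i2], List.mem_sublistsLen.2 ⟨pair_sublist_finRange hi, rfl⟩, ?_⟩
  exact List.mem_map.2 ⟨[j1, j2], List.mem_sublistsLen.2
    ⟨pair_sublist_finRange hj, rfl⟩, rfl⟩

lemma hms_surj {V V' α : Type} :
    ∀ (t : ℕ) (S : Fin t → Finset V) (S' : Fin t → Finset V')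
      (x : (Fin t → V) → α) (x' : (Fin t → V') → α),
      hms t S x = hms t S' x' → ∀ w : Fin t → V, (∀ i, w i ∈ S i) →
      ∃ w' : Fin t → V', (∀ i, w' i ∈ S' i) ∧ x w = x' w'
  | 0, S, S', x, x', h, w, hw => by
    refine ⟨finZeroElim, fun i => i.elim0, ?_⟩
    have hw0 : w = finZeroElim := funext fun i => i.elim0
    rw [hw0]
    exact h
  | t + 1, S, S', x, x', h, w, hw => by
    simp only [hms] at h
    have hmem : hms t (fun i => S i.castSucc)
        (fun w0 => x (Fin.snoc w0 (w (Fin.last t)))) ∈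
        (S' (Fin.last t)).val.map fun wl =>
          hms t (fun i => S' i.castSucc) fun w0 => x' (Fin.snoc w0 wl) := by
      rw [← h]
      exact Multiset.mem_map_of_mem _ (hw (Fin.last t))
    obtain ⟨wl', hwl', heq⟩ := Multiset.mem_map.1 hmem
    obtain ⟨w0', hw0', hxx⟩ := hms_surj t (fun i => S i.castSucc) (fun i => S' i.castSucc)
      (fun w0 => x (Fin.snoc w0 (w (Fin.last t))))
      (fun w0 => x' (Fin.snoc w0 wl')) heq.symm
      (fun i => w i.castSucc) (fun i => hw i.castSucc)
    refine ⟨Fin.snoc w0' wl', ?_, ?_⟩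
    · intro i
      refine Fin.lastCases ?_ ?_ i
      · simpa using hwl'
      · intro i; simpa using hw0' i
    · have h5 : x (Fin.snoc (fun i => w i.castSucc) (w (Fin.last t)))
          = x' (Fin.snoc w0' wl') := hxx
      rwa [show (Fin.snoc (fun i => w i.castSucc) (w (Fin.last t)) : Fin (t+1) → V) = w
        from Fin.snoc_init_self w] at h5

variable {C : Type}

lemma isoType_color {G H : ColoredGraph C} {k : ℕ} {vv : Fin k → G.V} {uu : Fin k → H.V}
    (h : G.isoType vv = H.isoType uu) (i : Fin k) : H.color (uu i) = G.color (vv i) :=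
  (congrFun (congrArg Prod.fst h) i).symm

lemma isoType_eq {G H : ColoredGraph C} {k : ℕ} {vv : Fin k → G.V} {uu : Fin k → H.V}
    (h : G.isoType vv = H.isoType uu) (i j : Fin k) : vv i = vv j ↔ uu i = uu j :=
  iff_of_eq (congrFun (congrFun (congrArg (fun z => z.2.1) h) i) j)

lemma isoType_adj {G H : ColoredGraph C} {k : ℕ} {vv : Fin k → G.V} {uu : Fin k → H.V}
    (h : G.isoType vv = H.isoType uu) (i j : Fin k) :
    G.adj (vv i) (vv j) ↔ H.adj (uu i) (uu j) :=
  iff_of_eq (congrFun (congrFun (congrArg (fun z => z.2.2) h) i) j)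

lemma key_props {k t : ℕ} (hk : 2 ≤ k) (ht : 1 ≤ t)
    (G H : ColoredGraph C) (v : Fin k → G.V) (w : Fin t → G.V)
    (u : Fin k → H.V) (w' : Fin t → H.V)
    (h0 : G.isoType v = H.isoType u)
    (key : ∀ ps ∈ tmpl k t, G.isoType (subst v w ps) = H.isoType (subst u w' ps)) :
    ∀ i j : Fin (k + t),
      H.color (Fin.append u w' i) = G.color (Fin.append v w i) ∧
      (Fin.append v w i = Fin.append v w j ↔ Fin.append u w' i = Fin.append u w' j) ∧
      (G.adj (Fin.append v w i) (Fin.append v w j) ↔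
        H.adj (Fin.append u w' i) (Fin.append u w' j)) := by
  have h0k : 0 < k := by omega
  have h1k : 1 < k := hk
  -- single-substitution extraction
  have single : ∀ (p : Fin k) (i : Fin t),
      G.isoType (Function.update v p (w i)) = H.isoType (Function.update u p (w' i)) := by
    intro p i
    exact key [(p, i)] (mem_tmpl_single (by omega) ht p i)
  have double : ∀ (i1 i2 : Fin t), i1 < i2 →
      G.isoType (Function.update (Function.update v ⟨1, h1k⟩ (w i2)) ⟨0, h0k⟩ (w i1))
      = H.isoType (Function.update (Function.update u ⟨1, h1k⟩ (w' i2)) ⟨0, h0k⟩ (w' i1)) := by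
    intro i1 i2 hi
    exact key [(⟨0, h0k⟩, i1), (⟨1, h1k⟩, i2)]
      (mem_tmpl_pair (show (⟨0, h0k⟩ : Fin k) < ⟨1, h1k⟩ by exact Nat.zero_lt_one) hi)
  have hne10 : (⟨1, h1k⟩ : Fin k) ≠ ⟨0, h0k⟩ := by
    simp [Fin.ext_iff]
  intro i j
  induction i using Fin.addCases with
  | left i =>
    induction j using Fin.addCases with
    | left j =>
      simp only [Fin.append_left]
      exact ⟨isoType_color h0 i, isoType_eq h0 i j, isoType_adj h0 i j⟩
    | right j =>
      simp only [Fin.append_left, Fin.append_right]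
      -- pair (v i, w j)
      by_cases hi0 : i = ⟨0, h0k⟩
      · subst hi0
        have hkey := single ⟨1, h1k⟩ j
        have hip : (⟨0, h0k⟩ : Fin k) ≠ ⟨1, h1k⟩ := hne10.symm
        have he := isoType_eq hkey ⟨0, h0k⟩ ⟨1, h1k⟩
        have ha := isoType_adj hkey ⟨0, h0k⟩ ⟨1, h1k⟩
        simp only [Function.update_self, Function.update_of_ne hip] at he ha
        exact ⟨isoType_color h0 _, he, ha⟩
      · have hkey := single ⟨0, h0k⟩ j
        have hip : i ≠ ⟨0, h0k⟩ := hi0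
        have he := isoType_eq hkey i ⟨0, h0k⟩
        have ha := isoType_adj hkey i ⟨0, h0k⟩
        simp only [Function.update_self, Function.update_of_ne hip] at he ha
        exact ⟨isoType_color h0 _, he, ha⟩
  | right i =>
    induction j using Fin.addCases with
    | left j =>
      simp only [Fin.append_left, Fin.append_right]
      -- pair (w i, v j)
      by_cases hj0 : j = ⟨0, h0k⟩
      · subst hj0
        have hkey := single ⟨1, h1k⟩ i
        have hjp : (⟨0, h0k⟩ : Fin k) ≠ ⟨1, h1k⟩ := hne10.symm
        have hc := isoType_color hkey ⟨1, h1k⟩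
        have he := isoType_eq hkey ⟨1, h1k⟩ ⟨0, h0k⟩
        have ha := isoType_adj hkey ⟨1, h1k⟩ ⟨0, h0k⟩
        simp only [Function.update_self, Function.update_of_ne hjp] at hc he ha
        exact ⟨hc, he, ha⟩
      · have hkey := single ⟨0, h0k⟩ i
        have hjp : j ≠ ⟨0, h0k⟩ := hj0
        have hc := isoType_color hkey ⟨0, h0k⟩
        have he := isoType_eq hkey ⟨0, h0k⟩ j
        have ha := isoType_adj hkey ⟨0, h0k⟩ j
        simp only [Function.update_self, Function.update_of_ne hjp] at hc he ha
        exact ⟨hc, he, ha⟩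
    | right j =>
      simp only [Fin.append_right]
      have hcolor : H.color (w' i) = G.color (w i) := by
        have hkey := single ⟨0, h0k⟩ i
        have hc := isoType_color hkey ⟨0, h0k⟩
        simpa only [Function.update_self] using hc
      rcases lt_trichotomy i j with hij | hij | hij
      · have hkey := double i j hij
        have hsubG : ∀ (p : Fin k),
            Function.update (Function.update v ⟨1, h1k⟩ (w j)) ⟨0, h0k⟩ (w i) ⟨0, h0k⟩ = w i :=
          fun _ => Function.update_self _ _ _
        have he := isoType_eq hkey ⟨0, h0k⟩ ⟨1, h1k⟩
        have ha := isoType_adj hkey ⟨0, h0k⟩ ⟨1, h1k⟩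
        simp only [Function.update_self, Function.update_of_ne hne10] at he ha
        exact ⟨hcolor, he, ha⟩
      · subst hij
        refine ⟨hcolor, by simp, ?_⟩
        exact iff_of_false (G.loopless _) (H.loopless _)
      · have hkey := double j i hij
        have he := isoType_eq hkey ⟨1, h1k⟩ ⟨0, h0k⟩
        have ha := isoType_adj hkey ⟨1, h1k⟩ ⟨0, h0k⟩
        simp only [Function.update_self, Function.update_of_ne hne10] at he ha
        exact ⟨hcolor, he, ha⟩

end FWLAux

/-- For `k ≥ 2`, `t ≥ 1` and `t ≥ n − k`, `(k,t)`-FWL solves the graph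
isomorphism problem for colored graphs with at most `n` vertices: equal stable `(k,t)`-FWL
color histograms imply isomorphism. -/

theorem stmt_0 {C : Type} (k t n : ℕ) (hk : 2 ≤ k) (ht : 1 ≤ t) (hnt : n - k ≤ t)
    (G H : ColoredGraph C) (hG : Fintype.card G.V ≤ n) (hH : Fintype.card H.V ≤ n)
    (hhist : ∀ l, fwlHistogram G k t l = fwlHistogram H k t l) :
    G.Isomorphic H := by
  classical
  open FWLAux in
  -- equal cardinalities
  have hcard : Fintype.card G.V = Fintype.card H.V := by
    have h := congrArg Multiset.card (hhist 0)
    simp only [fwlHistogram, Multiset.card_map, Finset.card_val, Finset.card_univ,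
      Fintype.card_fun, Fintype.card_fin] at h
    exact Nat.pow_left_injective (by omega) h
  by_cases hemp : IsEmpty G.V
  · have hempH : IsEmpty H.V := by
      rw [← Fintype.card_eq_zero_iff] at hemp ⊢
      omega
    exact ⟨@Equiv.equivOfIsEmpty _ _ hemp hempH, fun a b => isEmptyElim a,
      fun a => isEmptyElim a⟩
  · rw [not_isEmpty_iff] at hemp
    have hle : Fintype.card G.V ≤ k + t := le_trans hG (by omega)
    obtain ⟨f, hf⟩ : ∃ f : Fin (k + t) → G.V, Function.Surjective f := by
      obtain ⟨a0⟩ := hemp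
      refine ⟨fun x => if h : x.val < Fintype.card G.V
        then (Fintype.equivFin G.V).symm ⟨x.val, h⟩ else a0, fun a => ?_⟩
      refine ⟨⟨(Fintype.equivFin G.V a).val,
        lt_of_lt_of_le (Fintype.equivFin G.V a).isLt hle⟩, ?_⟩
      simp [(Fintype.equivFin G.V a).isLt]
    set v : Fin k → G.V := fun i => f (Fin.castAdd t i) with hv
    set w : Fin t → G.V := fun i => f (Fin.natAdd k i) with hw
    have hfapp : f = Fin.append v w := by
      funext x
      refine Fin.addCases (fun i => ?_) (fun i => ?_) x
      · rw [Fin.append_left]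
      · rw [Fin.append_right]
    -- find a matching tuple in H
    have hv1 : fwlColor G k t 1 v ∈ fwlHistogram H k t 1 := by
      rw [← hhist 1]
      exact Multiset.mem_map_of_mem _ (Finset.mem_univ v)
    obtain ⟨u, -, hu⟩ := Multiset.mem_map.1 hv1
    have hu1 : (H.isoType u, hms t (fun _ => Finset.univ)
          (fun ww => (nbhdTuple k t u ww).map fun p => H.isoType p))
        = (G.isoType v, hms t (fun _ => Finset.univ)
          (fun ww => (nbhdTuple k t v ww).map fun p => G.isoType p)) := hu
    rw [Prod.mk.injEq] at hu1
    obtain ⟨h0, hB⟩ := hu1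
    obtain ⟨w', -, hx⟩ := hms_surj t _ _ _ _ hB.symm w (fun i => Finset.mem_univ _)
    rw [nbhdTuple_eq, nbhdTuple_eq, List.map_map, List.map_map] at hx
    have key : ∀ ps ∈ tmpl k t, G.isoType (subst v w ps) = H.isoType (subst u w' ps) :=
      fun ps hps => List.map_inj_left.1 hx ps hps
    have hmain := key_props hk ht G H v w u w' h0.symm key
    -- build the isomorphism
    set g : Fin (k + t) → H.V := Fin.append u w' with hg
    set φ0 : G.V → H.V := fun a => g (Function.surjInv hf a) with hφ0
    have hfi : ∀ a, f (Function.surjInv hf a) = a := fun a => Function.surjInv_eq hf a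
    have hinj : Function.Injective φ0 := by
      intro a b hab
      have h2 := ((hmain (Function.surjInv hf a) (Function.surjInv hf b)).2.1).mpr hab
      rw [← hfapp, hfi, hfi] at h2
      exact h2
    have hbij : Function.Bijective φ0 :=
      (Fintype.bijective_iff_injective_and_card φ0).2 ⟨hinj, hcard⟩
    refine ⟨Equiv.ofBijective φ0 hbij, fun a b => ?_, fun a => ?_⟩
    · have h3 := (hmain (Function.surjInv hf a) (Function.surjInv hf b)).2.2
      rw [← hfapp, hfi, hfi] at h3
      exact h3
    · have h4 := (hmain (Function.surjInv hf a) (Function.surjInv hf a)).1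
      rw [← hfapp, hfi] at h4
      exact h4
end

section
/- For all k ≥ 2 and t ≥ 1, (k,t)-FWL is at most as powerful as (k+t)-WL: for every pair of colored graphs G, H, if the (k+t)-WL color histograms of G and H are equal, then the (k,t)-FWL color histograms of G and H are equal. -/
/-!
Common formalization of colored graphs, the k-dimensional Weisfeiler-Lehman (WL) test,
the (k,t)-dimensional Folklore WL test (k,t)-FWL and its extension (k,t)-FWL+, together
with the various specific refinement procedures (δ-k-LWL, GraphSNN, edge-based subgraph
refinement, KP-GNN, GDGNN, SLFWL(2), N²-FWL).

Convention: all colorings are formalized as explicitly-valued nested data (an injective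
HASH is the identity).  "The stable colors (resp. color histograms) are equal" is rendered
as "the colors (resp. color histograms) at every iteration l are equal"; since the colors
at iteration l determine those at every earlier iteration and the partitions stabilize on
finite graphs, this is equivalent to equality of the stable colors.
-/

open Finset

/-! ### Auxiliary machinery for Statement 1: simulating (k,t)-FWL inside (k+t)-WL. -/

noncomputable section Aux1

variable {C : Type}

/-- Cast a WL color along an equality of iteration indices. -/
def castWL {n L L' : ℕ} (h : L = L') (c : WLColor C n L) : WLColor C n L' := h ▸ c

/-- Extract the isomorphism type recorded in a WL color. -/
def wlIso {n : ℕ} : {L : ℕ} → WLColor C n L → IsoType C n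
  | 0, c => c
  | _+1, c => wlIso c.1

/-- Truncate a WL color by `d` iterations. -/
def wlTruncAdd {n : ℕ} : (d : ℕ) → {L : ℕ} → WLColor C n (L + d) → WLColor C n L
  | 0, _, c => c
  | d+1, _, c => wlTruncAdd d c.1

/-- A default WL color built from a default base color. -/
def wlDefault (c₀ : C) (n : ℕ) : (L : ℕ) → WLColor C n L
  | 0 => (fun _ => c₀, fun _ _ => True, fun _ _ => True)
  | L+1 => (wlDefault c₀ n L, fun _ => 0)

/-- Extract an element from a multiset, with a default value. -/
def mExtract {α : Type} (d : α) (s : Multiset α) : α := s.toList.headD d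

/-- From the WL color of `p` at iteration `L+1`, compute the WL color at iteration `L`
of the tuple obtained from `p` by copying entry `i` into position `j` (for `i ≠ j`). -/
def wlCopy (c₀ : C) {n : ℕ} (i j : Fin n) {L : ℕ} (c : WLColor C n (L+1)) : WLColor C n L :=
  mExtract (wlDefault c₀ n L)
    (@Multiset.filter _ (fun d => (wlIso d).2.1 i j) (Classical.decPred _) (c.2 j))

/-- Apply a list of copy operations (source, target) to a tuple. -/
def applyCopies {n : ℕ} {V : Type} : List (Fin n × Fin n) → (Fin n → V) → (Fin n → V)
  | [], q => q
  | pr :: ps, q => applyCopies ps (Function.update q pr.2 (q pr.1))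

/-- Apply a chain of copy operations on WL colors. -/
def copyChain (c₀ : C) {n : ℕ} :
    (ps : List (Fin n × Fin n)) → {L : ℕ} → WLColor C n (L + ps.length) → WLColor C n L
  | [], _, c => c
  | pr :: ps, _, c => copyChain c₀ ps (wlCopy c₀ pr.1 pr.2 c)

/-- Descend `t'` levels of the WL color, building the hierarchical multiset of the
results of `f` on the colors of the tuples with the positions `emb i` replaced. -/
def descend {α : Type} {n : ℕ} (B : ℕ) (f : WLColor C n B → α) :
    (t' : ℕ) → (Fin t' → Fin n) → WLColor C n (B + t') → HMS α t'
  | 0, _, c => f c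
  | t'+1, emb, c =>
      (c.2 (emb (Fin.last t'))).map (descend B f t' (fun i => emb i.castSucc))

/-- Override the values of a tuple at the positions `emb i` by `w i`. -/
def override {V : Type} {n : ℕ} :
    {t' : ℕ} → (Fin n → V) → (Fin t' → Fin n) → (Fin t' → V) → (Fin n → V)
  | 0, p, _, _ => p
  | t'+1, p, emb, w =>
      Function.update (override p (fun i => emb i.castSucc) (fun i => w i.castSucc))
        (emb (Fin.last t')) (w (Fin.last t'))

/-- From the WL color of `(v, w)` compute the list of values of `pl` on the WL colors of
the tuples in the neighborhood tuple `Q^F_w(v)` (padded with `w`). -/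
def fwlFinish {α : Type} (c₀ : C) (k t B : ℕ) (pl : WLColor C (k+t) B → α)
    (c : WLColor C (k+t) (B + min k t)) : List α :=
  (List.range (min k t + 1)).flatMap fun m =>
    ((List.finRange t).sublistsLen m).flatMap fun ws =>
      ((List.finRange k).sublistsLen m).map fun js =>
        let ps : List (Fin (k+t) × Fin (k+t)) :=
          (ws.map (Fin.natAdd k)).zip (js.map (Fin.castAdd t))
        if h : B + min k t = (B + (min k t - ps.length)) + ps.length then
          pl (wlTruncAdd (min k t - ps.length) (copyChain c₀ ps (castWL h c)))
        else pl (wlDefault c₀ (k+t) B)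

/-- The number of WL iterations needed to simulate `l` FWL iterations. -/
def Dlvl (k t : ℕ) : ℕ → ℕ
  | 0 => 0
  | l+1 => Dlvl k t l + (t + min k t)

/-- Restrict an isomorphism type of `(k+t)`-tuples to the first `k` coordinates. -/
def restrictIso (k t : ℕ) (I : IsoType C (k+t)) : IsoType C k :=
  (fun i => I.1 (Fin.castAdd t i),
   fun i j => I.2.1 (Fin.castAdd t i) (Fin.castAdd t j),
   fun i j => I.2.2 (Fin.castAdd t i) (Fin.castAdd t j))

/-- The simulation function: from the `(k+t)`-WL color at iteration `Dlvl k t l` of a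
tuple `p`, compute the `(k,t)`-FWL color at iteration `l` of the first `k` entries. -/
def phi (c₀ : C) (k t : ℕ) : (l : ℕ) → WLColor C (k+t) (Dlvl k t l) → FWLColor C k t l
  | 0, c => restrictIso k t (wlIso c)
  | l+1, c =>
      (phi c₀ k t l (wlTruncAdd (t + min k t) c),
       descend (Dlvl k t l + min k t) (fwlFinish c₀ k t (Dlvl k t l) (phi c₀ k t l)) t
         (Fin.natAdd k) (castWL (by simp only [Dlvl]; omega) c))

theorem castWL_wl {G : ColoredGraph C} {n L L' : ℕ} (h : L = L') (p : Fin n → G.V) :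
    castWL h (wlColor G n L p) = wlColor G n L' p := by subst h; rfl

theorem wlIso_wl (G : ColoredGraph C) (n : ℕ) : ∀ (L : ℕ) (p : Fin n → G.V),
    wlIso (wlColor G n L p) = G.isoType p
  | 0, _ => rfl
  | L+1, p => wlIso_wl G n L p

theorem wlTruncAdd_wl (G : ColoredGraph C) (n : ℕ) : ∀ (d L : ℕ) (p : Fin n → G.V),
    wlTruncAdd d (wlColor G n (L + d) p) = wlColor G n L p
  | 0, _, _ => rfl
  | d+1, L, p => wlTruncAdd_wl G n d L p

theorem mExtract_singleton {α : Type} (d a : α) : mExtract d ({a} : Multiset α) = a := by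
  have h : ({a} : Multiset α).toList.Perm [a] := by
    rw [← Multiset.coe_eq_coe, Multiset.coe_toList]; rfl
  rw [mExtract, List.perm_singleton.mp h]; rfl

theorem wlCopy_wl (c₀ : C) (G : ColoredGraph C) {n : ℕ} (i j : Fin n) (hij : i ≠ j)
    (L : ℕ) (p : Fin n → G.V) :
    wlCopy c₀ i j (wlColor G n (L+1) p) = wlColor G n L (Function.update p j (p i)) := by
  classical
  have h2 : (wlColor G n (L+1) p).2 j
      = Finset.univ.val.map (fun u => wlColor G n L (Function.update p j u)) := rfl
  rw [wlCopy, h2, Multiset.filter_map]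
  have h3 : @Multiset.filter _
        ((fun d => (wlIso d).2.1 i j) ∘ fun u => wlColor G n L (Function.update p j u)) _
        (Finset.univ.val : Multiset G.V)
      = @Multiset.filter _ (fun u => u = p i) _ (Finset.univ.val : Multiset G.V) := by
    apply Multiset.filter_congr
    intro u _
    simp only [Function.comp, wlIso_wl]
    show Function.update p j u i = Function.update p j u j ↔ u = p i
    rw [Function.update_of_ne hij, Function.update_self]
    exact eq_comm
  rw [h3, Multiset.filter_eq',
    Multiset.count_eq_one_of_mem Finset.univ.nodup (Finset.mem_univ _),
    Multiset.replicate_one, Multiset.map_singleton, mExtract_singleton]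

theorem copyChain_wl (c₀ : C) (G : ColoredGraph C) {n : ℕ} :
    ∀ (ps : List (Fin n × Fin n)) (L : ℕ) (p : Fin n → G.V),
      (∀ pr ∈ ps, pr.1 ≠ pr.2) →
      copyChain c₀ ps (wlColor G n (L + ps.length) p) = wlColor G n L (applyCopies ps p)
  | [], _, _, _ => rfl
  | pr :: ps, L, p, h => by
      have h1 : copyChain c₀ (pr :: ps) (wlColor G n (L + (pr :: ps).length) p)
          = copyChain c₀ ps (wlCopy c₀ pr.1 pr.2 (wlColor G n (L + ps.length + 1) p)) := rfl
      rw [h1, wlCopy_wl c₀ G pr.1 pr.2 (h pr (by simp)) _ p,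
        copyChain_wl c₀ G ps L _ (fun x hx => h x (by simp [hx]))]
      rfl

theorem override_update {V : Type} {n : ℕ} :
    ∀ {t' : ℕ} (p : Fin n → V) (emb : Fin t' → Fin n) (w : Fin t' → V) (a : Fin n) (x : V),
      (∀ i, emb i ≠ a) →
      override (Function.update p a x) emb w = Function.update (override p emb w) a x := by
  intro t'
  induction t' with
  | zero => intro p emb w a x _; rfl
  | succ t' ih =>
      intro p emb w a x h
      show Function.update (override (Function.update p a x) _ _) (emb (Fin.last t'))
          (w (Fin.last t')) = _
      rw [ih _ _ _ _ _ (fun i => h i.castSucc),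
        Function.update_comm (Ne.symm (h (Fin.last t')))]
      rfl

theorem override_emb {V : Type} {n : ℕ} :
    ∀ {t' : ℕ} (p : Fin n → V) (emb : Fin t' → Fin n), Function.Injective emb →
      ∀ (w : Fin t' → V) (i : Fin t'), override p emb w (emb i) = w i := by
  intro t'
  induction t' with
  | zero => intro _ _ _ _ i; exact i.elim0
  | succ t' ih =>
      intro p emb hemb w i
      induction i using Fin.lastCases with
      | last => show Function.update _ _ _ (emb (Fin.last t')) = _; simp
      | cast i =>
          show Function.update _ _ _ (emb i.castSucc) = _
          rw [Function.update_of_ne (fun hc => (Fin.castSucc_lt_last i).ne (hemb hc))]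
          exact ih p _ (fun a b hab => by
            have := hemb hab
            exact Fin.castSucc_injective _ this) _ i

theorem override_notin {V : Type} {n : ℕ} :
    ∀ {t' : ℕ} (p : Fin n → V) (emb : Fin t' → Fin n) (w : Fin t' → V) (a : Fin n),
      (∀ i, emb i ≠ a) → override p emb w a = p a := by
  intro t'
  induction t' with
  | zero => intro _ _ _ _ _; rfl
  | succ t' ih =>
      intro p emb w a h
      show Function.update _ _ _ a = _
      rw [Function.update_of_ne (fun hc => h (Fin.last t') hc.symm)]
      exact ih p _ _ a (fun i => h i.castSucc)

theorem descend_wl {α : Type} (G : ColoredGraph C) {n : ℕ} (B : ℕ) (f : WLColor C n B → α) :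
    ∀ (t' : ℕ) (emb : Fin t' → Fin n), Function.Injective emb →
      ∀ (p : Fin n → G.V),
      descend B f t' emb (wlColor G n (B + t') p)
        = hms t' (fun _ => Finset.univ) (fun w => f (wlColor G n B (override p emb w))) := by
  intro t'
  induction t' with
  | zero => intro emb _ p; rfl
  | succ t' ih =>
      intro emb hemb p
      have h1 : descend B f (t'+1) emb (wlColor G n (B + (t'+1)) p)
          = (Finset.univ.val.map
              (fun u => wlColor G n (B + t') (Function.update p (emb (Fin.last t')) u))).map
              (descend B f t' (fun i => emb i.castSucc)) := rfl
      rw [h1, Multiset.map_map, hms]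
      apply Multiset.map_congr rfl
      intro u _
      have hembc : Function.Injective (fun i : Fin t' => emb i.castSucc) :=
        fun a b hab => Fin.castSucc_injective _ (hemb hab)
      rw [Function.comp_apply, ih _ hembc]
      congr 1
      funext w
      have hsnoc : override p emb (Fin.snoc w u)
          = Function.update (override p (fun i => emb i.castSucc) w) (emb (Fin.last t')) u := by
        have h1 : (fun i : Fin t' => (Fin.snoc w u : Fin (t'+1) → G.V) i.castSucc) = w :=
          funext fun i => by simp
        show Function.update (override p (fun i => emb i.castSucc)
            (fun i : Fin t' => (Fin.snoc w u : Fin (t'+1) → G.V) i.castSucc))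
            (emb (Fin.last t'))
            ((Fin.snoc w u : Fin (t'+1) → G.V) (Fin.last t')) = _
        rw [h1, Fin.snoc_last]
      rw [override_update p _ w _ u
        (fun i hc => (Fin.castSucc_lt_last i).ne (hemb hc)), hsnoc]

theorem applyCopies_update {V : Type} {n : ℕ} :
    ∀ (ps : List (Fin n × Fin n)) (p : Fin n → V) (a : Fin n) (x : V),
      (∀ pr ∈ ps, pr.1 ≠ a ∧ pr.2 ≠ a) →
      applyCopies ps (Function.update p a x) = Function.update (applyCopies ps p) a x
  | [], _, _, _, _ => rfl
  | pr :: ps, p, a, x, h => by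
      show applyCopies ps (Function.update (Function.update p a x) pr.2
          (Function.update p a x pr.1)) = _
      rw [Function.update_of_ne (h pr (by simp)).1,
        Function.update_comm (Ne.symm (h pr (by simp)).2),
        applyCopies_update ps _ a x (fun q hq => h q (by simp [hq]))]
      rfl

theorem natAdd_ne_castAdd {k t : ℕ} (i : Fin t) (j : Fin k) :
    Fin.natAdd k i ≠ Fin.castAdd t j := by
  intro h
  have := congrArg Fin.val h
  simp only [Fin.coe_natAdd, Fin.coe_castAdd] at this
  omega

theorem castAdd_inj {k t : ℕ} : Function.Injective (fun a : Fin k => Fin.castAdd t a) := by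
  intro a b h
  have := congrArg Fin.val h
  simp only [Fin.coe_castAdd] at this
  exact Fin.ext this

theorem natAdd_inj {k t : ℕ} : Function.Injective (fun a : Fin t => Fin.natAdd k a) := by
  intro a b h
  have := congrArg Fin.val h
  simp only [Fin.coe_natAdd] at this
  exact Fin.ext (by omega)

theorem applyCopies_replaceList {V : Type} {k t : ℕ} :
    ∀ (js : List (Fin k)) (ws : List (Fin t)) (p : Fin (k+t) → V),
      js.Nodup → js.length = ws.length →
      (fun a => applyCopies ((ws.map (Fin.natAdd k)).zip (js.map (Fin.castAdd t))) p
          (Fin.castAdd t a))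
        = replaceList (fun a => p (Fin.castAdd t a))
            (js.zip (ws.map (fun i => p (Fin.natAdd k i))))
  | [], ws, p, _, _ => by simp [applyCopies, replaceList]
  | j :: js', [], p, _, hlen => by simp at hlen
  | j :: js', w :: ws', p, hnd, hlen => by
      have hrest : ∀ pr ∈ (ws'.map (Fin.natAdd k)).zip (js'.map (Fin.castAdd t)),
          pr.1 ≠ Fin.castAdd t j ∧ pr.2 ≠ Fin.castAdd t j := by
        rintro ⟨pa, pb⟩ hpr
        obtain ⟨h1, h2⟩ := List.of_mem_zip hpr
        obtain ⟨i1, -, rfl⟩ := List.mem_map.mp h1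
        obtain ⟨j2, hj2, rfl⟩ := List.mem_map.mp h2
        exact ⟨natAdd_ne_castAdd _ _,
          fun hc => (List.nodup_cons.mp hnd).1 (castAdd_inj hc ▸ hj2)⟩
      have IH := applyCopies_replaceList js' ws' p (List.nodup_cons.mp hnd).2
        (by simpa using hlen)
      funext a
      show applyCopies ((ws'.map (Fin.natAdd k)).zip (js'.map (Fin.castAdd t)))
          (Function.update p (Fin.castAdd t j) (p (Fin.natAdd k w))) (Fin.castAdd t a)
        = Function.update (replaceList (fun a => p (Fin.castAdd t a))
            (js'.zip (ws'.map (fun i => p (Fin.natAdd k i))))) j (p (Fin.natAdd k w)) a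
      rw [applyCopies_update _ _ _ _ hrest]
      by_cases haj : a = j
      · subst haj; rw [Function.update_self, Function.update_self]
      · rw [Function.update_of_ne (fun hc => haj (castAdd_inj hc)),
          Function.update_of_ne haj]
        exact congrFun IH a

theorem List.flatMap_congr' {α β : Type*} {l : List α} {f g : α → List β}
    (h : ∀ a ∈ l, f a = g a) : l.flatMap f = l.flatMap g := by
  induction l with
  | nil => rfl
  | cons a l ih =>
      simp only [List.flatMap_cons]
      rw [h a (by simp), ih (fun x hx => h x (by simp [hx]))]

theorem fwlFinish_wl {α : Type} (c₀ : C) (G : ColoredGraph C) (k t B : ℕ)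
    (pl : WLColor C (k+t) B → α) (F : (Fin k → G.V) → α)
    (hpl : ∀ q : Fin (k+t) → G.V, pl (wlColor G (k+t) B q) = F (fun a => q (Fin.castAdd t a)))
    (p : Fin (k+t) → G.V) :
    fwlFinish c₀ k t B pl (wlColor G (k+t) (B + min k t) p)
      = (nbhdTuple k t (fun a => p (Fin.castAdd t a)) (fun i => p (Fin.natAdd k i))).map F := by
  rw [nbhdTuple, List.map_flatMap, fwlFinish]
  apply List.flatMap_congr'
  intro m hm
  have hmM : m ≤ min k t := by
    simpa [Nat.lt_succ_iff] using List.mem_range.mp hm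
  rw [List.map_flatMap]
  apply List.flatMap_congr'
  intro ws hws
  obtain ⟨hwsub, hwlen⟩ := List.mem_sublistsLen.mp hws
  rw [List.map_map]
  apply List.map_congr_left
  intro js hjs
  obtain ⟨hjsub, hjlen⟩ := List.mem_sublistsLen.mp hjs
  have hjnd : js.Nodup := hjsub.nodup (List.nodup_finRange k)
  have hlen : ((ws.map (Fin.natAdd k)).zip (js.map (Fin.castAdd t))).length = m := by
    simp [List.length_zip, hwlen, hjlen]
  have hcond : B + min k t
      = (B + (min k t - ((ws.map (Fin.natAdd k)).zip (js.map (Fin.castAdd t))).length))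
        + ((ws.map (Fin.natAdd k)).zip (js.map (Fin.castAdd t))).length := by
    rw [hlen]; omega
  rw [dif_pos hcond, castWL_wl hcond p,
    copyChain_wl c₀ G _ _ p (by
      rintro ⟨pa, pb⟩ hpr
      obtain ⟨h1, h2⟩ := List.of_mem_zip hpr
      obtain ⟨i1, -, rfl⟩ := List.mem_map.mp h1
      obtain ⟨j2, -, rfl⟩ := List.mem_map.mp h2
      exact natAdd_ne_castAdd _ _),
    wlTruncAdd_wl, hpl,
    applyCopies_replaceList js ws p hjnd (by omega)]
  rfl

theorem phi_wl (c₀ : C) (k t : ℕ) (G : ColoredGraph C) :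
    ∀ (l : ℕ) (p : Fin (k+t) → G.V),
      phi c₀ k t l (wlColor G (k+t) (Dlvl k t l) p)
        = fwlColor G k t l (fun a => p (Fin.castAdd t a))
  | 0, p => by
      show restrictIso k t (wlIso (wlColor G (k+t) 0 p)) = _
      rw [wlIso_wl]
      rfl
  | l+1, p => by
      simp only [phi]
      have htr : wlTruncAdd (t + min k t) (wlColor G (k+t) (Dlvl k t (l+1)) p)
          = wlColor G (k+t) (Dlvl k t l) p :=
        wlTruncAdd_wl G (k+t) (t + min k t) (Dlvl k t l) p
      rw [htr, castWL_wl, phi_wl c₀ k t G l p,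
        descend_wl G (Dlvl k t l + min k t) _ t (Fin.natAdd k) natAdd_inj p]
      rw [show fwlColor G k t (l+1) (fun a => p (Fin.castAdd t a))
          = (fwlColor G k t l (fun a => p (Fin.castAdd t a)),
             hms t (fun _ => Finset.univ) (fun w =>
               (nbhdTuple k t (fun a => p (Fin.castAdd t a)) w).map (fwlColor G k t l)))
          from rfl]
      congr 1
      congr 1
      funext w
      rw [fwlFinish_wl c₀ G k t (Dlvl k t l) (phi c₀ k t l) (fwlColor G k t l)
        (fun q => phi_wl c₀ k t G l q) (override p (Fin.natAdd k) w)]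
      have h1 : (fun a => override p (Fin.natAdd k) w (Fin.castAdd t a))
          = (fun a => p (Fin.castAdd t a)) :=
        funext fun a => override_notin p _ w _ (fun i => natAdd_ne_castAdd i a)
      have h2 : (fun i => override p (Fin.natAdd k) w (Fin.natAdd k i)) = w :=
        funext fun i => override_emb p _ natAdd_inj w i
      rw [h1, h2]

def restrictEquiv {V : Type} (k t : ℕ) (P : (Fin k → V) → Prop) :
    {p : Fin (k+t) → V // P (fun a => p (Fin.castAdd t a))}
      ≃ {v : Fin k → V // P v} × (Fin t → V) where
  toFun x := (⟨fun a => x.1 (Fin.castAdd t a), x.2⟩, fun i => x.1 (Fin.natAdd k i))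
  invFun y := ⟨Fin.append y.1.1 y.2, by
    have h : (fun a => Fin.append y.1.1 y.2 (Fin.castAdd t a)) = y.1.1 :=
      funext fun a => Fin.append_left _ _ a
    rw [h]; exact y.1.2⟩
  left_inv x := Subtype.ext (funext fun a => by
    induction a using Fin.addCases with
    | left i => exact Fin.append_left _ _ i
    | right i => exact Fin.append_right _ _ i)
  right_inv y := by
    refine Prod.ext (Subtype.ext (funext fun a => Fin.append_left _ _ a)) ?_
    funext i; exact Fin.append_right _ _ i

theorem card_filter_univ {W : Type} [Fintype W] (Q : W → Prop) [DecidablePred Q] :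
    Multiset.card (Multiset.filter Q (Finset.univ.val : Multiset W))
      = Fintype.card {x : W // Q x} := by
  rw [Fintype.card_subtype]
  rfl

theorem map_restrict_smul {V : Type} [Fintype V] [DecidableEq V] (k t : ℕ) {α : Type}
    (f : (Fin k → V) → α) :
    (Finset.univ.val.map fun p : Fin (k+t) → V => f (fun a => p (Fin.castAdd t a)))
      = Fintype.card (Fin t → V) • Finset.univ.val.map f := by
  classical
  ext b
  rw [Multiset.count_nsmul, Multiset.count_map, Multiset.count_map,
    card_filter_univ, card_filter_univ,
    Fintype.card_congr (restrictEquiv k t (fun v => b = f v)), Fintype.card_prod]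
  ring

end Aux1

/-- For `k ≥ 2`, `t ≥ 1`, `(k,t)`-FWL is at most as powerful as
`(k+t)`-WL: equal stable `(k+t)`-WL color histograms imply equal stable `(k,t)`-FWL color
histograms. -/
theorem stmt_1 {C : Type} (k t : ℕ) (hk : 2 ≤ k) (ht : 1 ≤ t)
    (G H : ColoredGraph C)
    (hwl : ∀ l, wlHistogram G (k + t) l = wlHistogram H (k + t) l) :
    ∀ l, fwlHistogram G k t l = fwlHistogram H k t l := by
  classical
  intro l
  have hcard : Fintype.card G.V = Fintype.card H.V := by
    have hc := congrArg Multiset.card (hwl 0)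
    rw [wlHistogram, wlHistogram, Multiset.card_map, Multiset.card_map] at hc
    have hc2 : Fintype.card (Fin (k+t) → G.V) = Fintype.card (Fin (k+t) → H.V) := hc
    rw [Fintype.card_fun, Fintype.card_fun, Fintype.card_fin] at hc2
    exact Nat.pow_left_injective (by omega) hc2
  by_cases hE : Fintype.card G.V = 0
  · haveI hGE : IsEmpty G.V := Fintype.card_eq_zero_iff.mp hE
    haveI hHE : IsEmpty H.V := Fintype.card_eq_zero_iff.mp (hcard ▸ hE)
    haveI h2 : IsEmpty (Fin k → G.V) := ⟨fun f => hGE.false (f ⟨0, by omega⟩)⟩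
    haveI h3 : IsEmpty (Fin k → H.V) := ⟨fun f => hHE.false (f ⟨0, by omega⟩)⟩
    rw [fwlHistogram, fwlHistogram, Finset.univ_eq_empty, Finset.univ_eq_empty]
    rfl
  · haveI hne : Nonempty G.V := Fintype.card_pos_iff.mp (Nat.pos_of_ne_zero hE)
    set c₀ := G.color (Classical.arbitrary G.V) with hc₀
    have key := congrArg (Multiset.map (phi c₀ k t l)) (hwl (Dlvl k t l))
    rw [wlHistogram, wlHistogram] at key
    have eG : (Finset.univ.val.map fun v : Fin (k+t) → G.V =>
          wlColor G (k+t) (Dlvl k t l) v).map (phi c₀ k t l)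
        = Fintype.card (Fin t → G.V) • fwlHistogram G k t l := by
      calc (Finset.univ.val.map fun v : Fin (k+t) → G.V =>
              wlColor G (k+t) (Dlvl k t l) v).map (phi c₀ k t l)
          = Finset.univ.val.map
              (fun p : Fin (k+t) → G.V =>
                phi c₀ k t l (wlColor G (k+t) (Dlvl k t l) p)) := by
            rw [Multiset.map_map]; rfl
        _ = Finset.univ.val.map (fun p : Fin (k+t) → G.V =>
              fwlColor G k t l (fun a => p (Fin.castAdd t a))) :=
            Multiset.map_congr rfl (fun p _ => phi_wl c₀ k t G l p)
        _ = Fintype.card (Fin t → G.V) • Finset.univ.val.map (fwlColor G k t l) :=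
            map_restrict_smul k t _
        _ = Fintype.card (Fin t → G.V) • fwlHistogram G k t l := rfl
    have eH : (Finset.univ.val.map fun v : Fin (k+t) → H.V =>
          wlColor H (k+t) (Dlvl k t l) v).map (phi c₀ k t l)
        = Fintype.card (Fin t → H.V) • fwlHistogram H k t l := by
      calc (Finset.univ.val.map fun v : Fin (k+t) → H.V =>
              wlColor H (k+t) (Dlvl k t l) v).map (phi c₀ k t l)
          = Finset.univ.val.map
              (fun p : Fin (k+t) → H.V =>
                phi c₀ k t l (wlColor H (k+t) (Dlvl k t l) p)) := by
            rw [Multiset.map_map]; rfl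
        _ = Finset.univ.val.map (fun p : Fin (k+t) → H.V =>
              fwlColor H k t l (fun a => p (Fin.castAdd t a))) :=
            Multiset.map_congr rfl (fun p _ => phi_wl c₀ k t H l p)
        _ = Fintype.card (Fin t → H.V) • Finset.univ.val.map (fwlColor H k t l) :=
            map_restrict_smul k t _
        _ = Fintype.card (Fin t → H.V) • fwlHistogram H k t l := rfl
    rw [eG, eH] at key
    have hn : Fintype.card (Fin t → H.V) = Fintype.card (Fin t → G.V) := by
      rw [Fintype.card_fun, Fintype.card_fun, hcard]
    rw [hn] at key
    have hnz : Fintype.card (Fin t → G.V) ≠ 0 := by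
      rw [Fintype.card_fun, Fintype.card_fin]
      exact pow_ne_zero t hE
    refine Multiset.ext.mpr fun b => ?_
    have hb := congrArg (Multiset.count b) key
    rw [Multiset.count_nsmul, Multiset.count_nsmul] at hb
    exact Nat.eq_of_mul_eq_mul_left (Nat.pos_of_ne_zero hnz) hb
end

section
/- Let k ≥ 2, t ≥ 1, let G, H be colored graphs, v₁∈V(G)^k, v₂∈V(H)^k, w₁∈V(G)^t, w₂∈V(H)^t, and set p₁=(v₁,w₁), p₂=(v₂,w₂) (concatenated (k+t)-tuples). Then p₁ and p₂ have the same isomorphism type if and only if the tuples of isomorphism types over the neighborhood tuples coincide componentwise, i.e., (isotype(u₁) : u₁∈Q^F_{w₁}(v₁)) = (isotype(u₂) : u₂∈Q^F_{w₂}(v₂)). -/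
/-!
Common formalization of colored graphs, the k-dimensional Weisfeiler-Lehman (WL) test,
the (k,t)-dimensional Folklore WL test (k,t)-FWL and its extension (k,t)-FWL+, together
with the various specific refinement procedures (δ-k-LWL, GraphSNN, edge-based subgraph
refinement, KP-GNN, GDGNN, SLFWL(2), N²-FWL).

Convention: all colorings are formalized as explicitly-valued nested data (an injective
HASH is the identity).  "The stable colors (resp. color histograms) are equal" is rendered
as "the colors (resp. color histograms) at every iteration l are equal"; since the colors
at iteration l determine those at every earlier iteration and the partitions stabilize on
finite graphs, this is equivalent to equality of the stable colors.
-/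

open Finset

namespace Stmt5Aux


lemma comp_replaceList {V W : Type} (F : V → W) {k : ℕ} (b : Fin k → V) :
    ∀ ps : List (Fin k × V),
      F ∘ replaceList b ps = replaceList (F ∘ b) (ps.map fun p => (p.1, F p.2))
  | [] => rfl
  | p :: ps => by
      simp only [replaceList, List.map_cons, Function.comp_update, comp_replaceList F b ps]

def sig (k t : ℕ) (js : List (Fin k)) (ws : List (Fin t)) : Fin k → Fin (k + t) :=
  replaceList (Fin.castAdd t) (js.zip (ws.map (Fin.natAdd k)))

lemma replace_eq {V : Type} {k t : ℕ} (v : Fin k → V) (w : Fin t → V)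
    (js : List (Fin k)) (ws : List (Fin t)) :
    replaceList v (js.zip (ws.map w)) = Fin.append v w ∘ sig k t js ws := by
  have hb : (Fin.append v w ∘ Fin.castAdd t) = v := funext fun i => Fin.append_left v w i
  have hl : (js.zip (ws.map (Fin.natAdd k))).map
      (fun p => (p.1, Fin.append v w p.2)) = js.zip (ws.map w) := by
    rw [List.zip_map_right, List.zip_map_right, List.map_map]
    refine List.map_inj_left.2 fun p _ => ?_
    show ((p.1, Fin.append v w (Fin.natAdd k p.2)) : Fin k × V) = (p.1, w p.2)
    rw [Fin.append_right]
  rw [sig, comp_replaceList, hb, hl]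

def pairsL (k t : ℕ) : List (List (Fin k) × List (Fin t)) :=
  (List.range (min k t + 1)).flatMap fun m =>
    ((List.finRange t).sublistsLen m).flatMap fun ws =>
      ((List.finRange k).sublistsLen m).map fun js => (js, ws)

lemma nbhdTuple_eq {V : Type} (k t : ℕ) (v : Fin k → V) (w : Fin t → V) :
    nbhdTuple k t v w = (pairsL k t).map fun p => Fin.append v w ∘ sig k t p.1 p.2 := by
  simp only [nbhdTuple, pairsL, List.map_flatMap, List.map_map, Function.comp, replace_eq]
  rfl

lemma mem_pairsL {k t m : ℕ} {js : List (Fin k)} {ws : List (Fin t)} (hm : m ≤ min k t)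
    (hjs : js.Sublist (List.finRange k)) (hws : ws.Sublist (List.finRange t))
    (hjl : js.length = m) (hwl : ws.length = m) : (js, ws) ∈ pairsL k t := by
  simp only [pairsL, List.mem_flatMap, List.mem_range, List.mem_map, List.mem_sublistsLen]
  exact ⟨m, Nat.lt_succ_of_le hm, ws, ⟨hws, hwl⟩, js, ⟨hjs, hjl⟩, rfl⟩

lemma pair_sublist {n : ℕ} {a b : Fin n} (h : a < b) :
    [a, b].Sublist (List.finRange n) := by
  have hb : (b : ℕ) < n := b.isLt
  have : List.finRange n =
      (List.finRange n).take b.val ++ (List.finRange n).drop b.val :=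
    (List.take_append_drop _ _).symm
  rw [this]
  have h1 : [a].Sublist ((List.finRange n).take b.val) := by
    refine List.singleton_sublist.2 (List.mem_iff_getElem.2 ⟨a.val, ?_, ?_⟩)
    · simp [List.length_take]; try omega
    · simp [List.getElem_take, List.getElem_finRange]
  have h2 : [b].Sublist ((List.finRange n).drop b.val) := by
    refine List.singleton_sublist.2 (List.mem_iff_getElem.2 ⟨0, ?_, ?_⟩)
    · simp [List.length_drop]; try omega
    · simp [List.getElem_drop, List.getElem_finRange]
  exact List.Sublist.append h1 h2

lemma addCases_ex {k t : ℕ} (x : Fin (k + t)) :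
    (∃ j : Fin k, x = Fin.castAdd t j) ∨ ∃ i : Fin t, x = Fin.natAdd k i := by
  rcases Nat.lt_or_ge x.val k with h | h
  · exact Or.inl ⟨⟨x.val, h⟩, Fin.ext rfl⟩
  · refine Or.inr ⟨⟨x.val - k, by have := x.isLt; omega⟩, Fin.ext ?_⟩
    simp [Fin.natAdd]; omega

lemma sig_nil {k t : ℕ} : sig k t [] [] = Fin.castAdd t := rfl

lemma sig_one {k t : ℕ} (j : Fin k) (i : Fin t) :
    sig k t [j] [i] = Function.update (Fin.castAdd t) j (Fin.natAdd k i) := rfl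

lemma sig_two {k t : ℕ} (j₁ j₂ : Fin k) (i₁ i₂ : Fin t) :
    sig k t [j₁, j₂] [i₁, i₂] =
      Function.update (Function.update (Fin.castAdd t) j₂ (Fin.natAdd k i₂)) j₁
        (Fin.natAdd k i₁) := rfl

lemma sig_extract {k t : ℕ} (hk : 2 ≤ k) (ht : 1 ≤ t) (a b : Fin (k + t)) :
    ∃ js ws, (js, ws) ∈ pairsL k t ∧
      ∃ p q : Fin k, sig k t js ws p = a ∧ sig k t js ws q = b := by
  have hx0 : (0 : ℕ) < k := by omega
  have hx1 : (1 : ℕ) < k := by omega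
  set x0 : Fin k := ⟨0, hx0⟩ with hx0def
  set x1 : Fin k := ⟨1, hx1⟩ with hx1def
  have hne01 : x1 ≠ x0 := by simp [hx0def, hx1def, Fin.ext_iff]
  rcases addCases_ex a with ⟨ja, rfl⟩ | ⟨ia, rfl⟩ <;>
    rcases addCases_ex b with ⟨jb, rfl⟩ | ⟨ib, rfl⟩
  · exact ⟨[], [], mem_pairsL (Nat.zero_le _) (List.nil_sublist _) (List.nil_sublist _) rfl rfl,
      ja, jb, rfl, rfl⟩
  · -- a = castAdd ja, b = natAdd ib
    set j' : Fin k := if ja = x0 then x1 else x0 with hj'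
    have hne : ja ≠ j' := by
      by_cases h : ja = x0 <;> simp [hj', h, hne01.symm]
    refine ⟨[j'], [ib], mem_pairsL (m := 1) (Nat.le_min.2 ⟨by omega, ht⟩)
      (List.singleton_sublist.2 (List.mem_finRange _))
      (List.singleton_sublist.2 (List.mem_finRange _)) rfl rfl, ja, j', ?_, ?_⟩
    · rw [sig_one, Function.update_of_ne hne]
    · rw [sig_one, Function.update_self]
  · -- a = natAdd ia, b = castAdd jb
    set j' : Fin k := if jb = x0 then x1 else x0 with hj'
    have hne : jb ≠ j' := by
      by_cases h : jb = x0 <;> simp [hj', h, hne01.symm]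
    refine ⟨[j'], [ia], mem_pairsL (m := 1) (Nat.le_min.2 ⟨by omega, ht⟩)
      (List.singleton_sublist.2 (List.mem_finRange _))
      (List.singleton_sublist.2 (List.mem_finRange _)) rfl rfl, j', jb, ?_, ?_⟩
    · rw [sig_one, Function.update_self]
    · rw [sig_one, Function.update_of_ne hne]
  · -- both natAdd
    rcases lt_trichotomy ia ib with hlt | heq | hgt
    · have ht2 : 2 ≤ t := by
        have h1 := ib.isLt
        have h2 : (ia : ℕ) < (ib : ℕ) := hlt
        omega
      refine ⟨[x0, x1], [ia, ib], mem_pairsL (m := 2)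
        (Nat.le_min.2 ⟨hk, ht2⟩) (pair_sublist (by simp [hx0def, hx1def, Fin.lt_def]))
        (pair_sublist hlt) rfl rfl, x0, x1, ?_, ?_⟩
      · rw [sig_two, Function.update_self]
      · rw [sig_two, Function.update_of_ne hne01, Function.update_self]
    · subst heq
      exact ⟨[x0], [ia], mem_pairsL (m := 1) (Nat.le_min.2 ⟨by omega, ht⟩)
        (List.singleton_sublist.2 (List.mem_finRange _))
        (List.singleton_sublist.2 (List.mem_finRange _)) rfl rfl, x0, x0,
        by rw [sig_one, Function.update_self], by rw [sig_one, Function.update_self]⟩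
    · have ht2 : 2 ≤ t := by
        have h1 := ia.isLt
        have h2 : (ib : ℕ) < (ia : ℕ) := hgt
        omega
      refine ⟨[x0, x1], [ib, ia], mem_pairsL (m := 2)
        (Nat.le_min.2 ⟨hk, ht2⟩) (pair_sublist (by simp [hx0def, hx1def, Fin.lt_def]))
        (pair_sublist hgt) rfl rfl, x1, x0, ?_, ?_⟩
      · rw [sig_two, Function.update_of_ne hne01, Function.update_self]
      · rw [sig_two, Function.update_self]

end Stmt5Aux


/-- The concatenated `(k+t)`-tuples `p₁ = (v₁,w₁)` and `p₂ = (v₂,w₂)`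
have the same isomorphism type iff the tuples of isomorphism types over the neighborhood
tuples `Q^F_{w₁}(v₁)` and `Q^F_{w₂}(v₂)` coincide componentwise. -/
theorem stmt_5 {C : Type} (k t : ℕ) (hk : 2 ≤ k) (ht : 1 ≤ t)
    (G H : ColoredGraph C)
    (v₁ : Fin k → G.V) (v₂ : Fin k → H.V) (w₁ : Fin t → G.V) (w₂ : Fin t → H.V) :
    G.isoType (Fin.append v₁ w₁) = H.isoType (Fin.append v₂ w₂) ↔
      (nbhdTuple k t v₁ w₁).map (fun u => G.isoType u) =
        (nbhdTuple k t v₂ w₂).map (fun u => H.isoType u) := by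
  open Stmt5Aux in
  rw [nbhdTuple_eq, nbhdTuple_eq, List.map_map, List.map_map]
  constructor
  · intro h
    refine List.map_inj_left.2 fun p _ => ?_
    show G.isoType (Fin.append v₁ w₁ ∘ sig k t p.1 p.2)
        = H.isoType (Fin.append v₂ w₂ ∘ sig k t p.1 p.2)
    have h1 : ∀ i, G.color (Fin.append v₁ w₁ i) = H.color (Fin.append v₂ w₂ i) :=
      fun i => congrFun (congrArg Prod.fst h) i
    have h2 : ∀ i j, (Fin.append v₁ w₁ i = Fin.append v₁ w₁ j)
        = (Fin.append v₂ w₂ i = Fin.append v₂ w₂ j) :=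
      fun i j => congrFun (congrFun (congrArg (fun z => z.2.1) h) i) j
    have h3 : ∀ i j, G.adj (Fin.append v₁ w₁ i) (Fin.append v₁ w₁ j)
        = H.adj (Fin.append v₂ w₂ i) (Fin.append v₂ w₂ j) :=
      fun i j => congrFun (congrFun (congrArg (fun z => z.2.2) h) i) j
    refine Prod.ext ?_ (Prod.ext ?_ ?_)
    · funext i; exact h1 _
    · funext i j; exact h2 _ _
    · funext i j; exact h3 _ _
  · intro h
    have h' := List.map_inj_left.1 h
    refine Prod.ext ?_ (Prod.ext ?_ ?_)
    · funext i
      obtain ⟨js, ws, hmem, p, q, hp, hq⟩ := sig_extract hk ht i i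
      have := congrFun (congrArg Prod.fst (h' (js, ws) hmem)) p
      simpa [ColoredGraph.isoType, hp] using this
    · funext i j
      obtain ⟨js, ws, hmem, p, q, hp, hq⟩ := sig_extract hk ht i j
      have := congrFun (congrFun (congrArg (fun z => z.2.1) (h' (js, ws) hmem)) p) q
      simpa [ColoredGraph.isoType, hp, hq] using this
    · funext i j
      obtain ⟨js, ws, hmem, p, q, hp, hq⟩ := sig_extract hk ht i j
      have := congrFun (congrFun (congrArg (fun z => z.2.2) (h' (js, ws) hmem)) p) q
      simpa [ColoredGraph.isoType, hp, hq] using this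
end

section
/- Let k ≥ 2, t ≥ 1 and let G be a colored graph with stable (k+t)-WL coloring C^∞. For v∈V(G)^k let H_t(v)={(v,w) : w∈V(G)^t} ⊆ V(G)^{k+t}. If v₁,v₂∈V(G)^k, w₁,w₂∈V(G)^t and C^∞((v₁,w₁)) = C^∞((v₂,w₂)), then {{C^∞(q) : q∈H_t(v₁)}}_t = {{C^∞(q) : q∈H_t(v₂)}}_t, where the hierarchical multiset is taken over the last t coordinates. -/
/-!
Common formalization of colored graphs, the k-dimensional Weisfeiler-Lehman (WL) test,
the (k,t)-dimensional Folklore WL test (k,t)-FWL and its extension (k,t)-FWL+, together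
with the various specific refinement procedures (δ-k-LWL, GraphSNN, edge-based subgraph
refinement, KP-GNN, GDGNN, SLFWL(2), N²-FWL).

Convention: all colorings are formalized as explicitly-valued nested data (an injective
HASH is the identity).  "The stable colors (resp. color histograms) are equal" is rendered
as "the colors (resp. color histograms) at every iteration l are equal"; since the colors
at iteration l determine those at every earlier iteration and the partitions stabilize on
finite graphs, this is equivalent to equality of the stable colors.
-/

open Finset

section Aux

/-- Overwrite the `m` coordinates `k, k+1, …, k+m-1` of a `(k+t)`-tuple by `w`. -/
def wlWrite {V : Type} (k t : ℕ) (q : Fin (k + t) → V) (m : ℕ) (w : Fin m → V) :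
    Fin (k + t) → V :=
  fun j => if h : k ≤ (j : ℕ) ∧ (j : ℕ) - k < m then w ⟨(j : ℕ) - k, h.2⟩ else q j

lemma wlWrite_zero {V : Type} (k t : ℕ) (q : Fin (k + t) → V) (w : Fin 0 → V) :
    wlWrite k t q 0 w = q := by
  funext j
  simp only [wlWrite]
  rw [dif_neg]
  rintro ⟨-, h2⟩
  omega

lemma wlWrite_snoc {V : Type} (k t : ℕ) (q : Fin (k + t) → V) (m : ℕ)
    (hmt : k + m < k + t) (w : Fin m → V) (wl : V) :
    wlWrite k t q (m + 1) (Fin.snoc w wl) =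
      wlWrite k t (Function.update q ⟨k + m, hmt⟩ wl) m w := by
  funext j
  simp only [wlWrite]
  by_cases h : k ≤ (j : ℕ) ∧ (j : ℕ) - k < m + 1
  · rw [dif_pos h]
    by_cases h2 : (j : ℕ) - k < m
    · rw [dif_pos ⟨h.1, h2⟩]
      have : (⟨(j : ℕ) - k, h.2⟩ : Fin (m + 1)) = Fin.castSucc ⟨(j : ℕ) - k, h2⟩ := by
        simp [Fin.ext_iff]
      rw [this, Fin.snoc_castSucc]
    · have hjm : (j : ℕ) - k = m := by omega
      have : (⟨(j : ℕ) - k, h.2⟩ : Fin (m + 1)) = Fin.last m := by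
        simp [Fin.ext_iff, hjm]
      rw [this, Fin.snoc_last, dif_neg (by omega)]
      have hj : j = (⟨k + m, hmt⟩ : Fin (k + t)) := by
        simp [Fin.ext_iff]; omega
      rw [hj, Function.update_self]
  · rw [dif_neg h, dif_neg (by omega)]
    rw [Function.update_of_ne]
    intro hj
    apply h
    rw [hj]
    simp only [Fin.val_mk]
    omega

lemma wlWrite_append {V : Type} (k t : ℕ) (v : Fin k → V) (w₀ w : Fin t → V) :
    wlWrite k t (Fin.append v w₀) t w = Fin.append v w := by
  funext j
  refine Fin.addCases (fun i => ?_) (fun i => ?_) j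
  · simp only [wlWrite, Fin.coe_castAdd]
    rw [dif_neg (by rintro ⟨h1, -⟩; omega)]
    rw [Fin.append_left, Fin.append_left]
  · simp only [wlWrite, Fin.coe_natAdd]
    rw [dif_pos ⟨by omega, by omega⟩, Fin.append_right]
    congr 1
    simp [Fin.ext_iff]

lemma map_congr_of_map_eq {α β γ : Type*} {s₁ s₂ : Multiset α} {g₁ g₂ : α → β}
    {f₁ f₂ : α → γ} (h : s₁.map g₁ = s₂.map g₂)
    (hc : ∀ a b, g₁ a = g₂ b → f₁ a = f₂ b) : s₁.map f₁ = s₂.map f₂ := by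
  rw [← Multiset.rel_eq] at h ⊢
  rw [Multiset.rel_map] at h ⊢
  exact h.mono fun a _ b _ hab => hc a b hab

lemma wlColor_fst {C : Type} (G : ColoredGraph C) (n l : ℕ) (q₁ q₂ : Fin n → G.V)
    (h : wlColor G n (l + 1) q₁ = wlColor G n (l + 1) q₂) :
    wlColor G n l q₁ = wlColor G n l q₂ :=
  congrArg Prod.fst h

lemma wlKey {C : Type} (G : ColoredGraph C) (k t : ℕ) (m : ℕ) (hm : m ≤ t) :
    ∀ (l : ℕ) (q₁ q₂ : Fin (k + t) → G.V),
      wlColor G (k + t) (l + m) q₁ = wlColor G (k + t) (l + m) q₂ →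
      hms m (fun _ => Finset.univ)
          (fun w => wlColor G (k + t) l (wlWrite k t q₁ m w)) =
        hms m (fun _ => Finset.univ)
          (fun w => wlColor G (k + t) l (wlWrite k t q₂ m w)) := by
  induction m with
  | zero =>
    intro l q₁ q₂ h
    show wlColor G (k + t) l (wlWrite k t q₁ 0 finZeroElim) =
      wlColor G (k + t) l (wlWrite k t q₂ 0 finZeroElim)
    rw [wlWrite_zero, wlWrite_zero]
    exact h
  | succ m ih =>
    intro l q₁ q₂ h
    have hmt : k + m < k + t := by omega
    set j : Fin (k + t) := ⟨k + m, hmt⟩ with hj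
    have h' : wlColor G (k + t) ((l + m) + 1) q₁ = wlColor G (k + t) ((l + m) + 1) q₂ := h
    have hmul :
        (Finset.univ.val.map fun w =>
            wlColor G (k + t) (l + m) (Function.update q₁ j w)) =
          Finset.univ.val.map fun w =>
            wlColor G (k + t) (l + m) (Function.update q₂ j w) :=
      congrFun (congrArg Prod.snd h') j
    show (Finset.univ.val.map fun wl =>
        hms m (fun _ => Finset.univ)
          fun w => wlColor G (k + t) l (wlWrite k t q₁ (m + 1) (Fin.snoc w wl))) =
      Finset.univ.val.map fun wl =>
        hms m (fun _ => Finset.univ)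
          fun w => wlColor G (k + t) l (wlWrite k t q₂ (m + 1) (Fin.snoc w wl))
    refine map_congr_of_map_eq hmul fun a b hab => ?_
    simp only [wlWrite_snoc k t _ m hmt]
    exact ih (by omega) l _ _ hab

end Aux

/-- If the stable `(k+t)`-WL colors of `(v₁,w₁)` and `(v₂,w₂)` in a
colored graph `G` are equal, then the hierarchical multisets of stable `(k+t)`-WL colors
over `H_t(v₁) = {(v₁,w) : w ∈ V(G)^t}` and `H_t(v₂)` (over the last `t` coordinates)
are equal. -/
theorem stmt_6 {C : Type} (k t : ℕ) (hk : 2 ≤ k) (ht : 1 ≤ t)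
    (G : ColoredGraph C)
    (v₁ v₂ : Fin k → G.V) (w₁ w₂ : Fin t → G.V)
    (hstable : ∀ l, wlColor G (k + t) l (Fin.append v₁ w₁) =
      wlColor G (k + t) l (Fin.append v₂ w₂)) :
    ∀ l, hms t (fun _ => Finset.univ) (fun w => wlColor G (k + t) l (Fin.append v₁ w)) =
      hms t (fun _ => Finset.univ) (fun w => wlColor G (k + t) l (Fin.append v₂ w)) := by
  intro l
  have key := wlKey G k t t le_rfl l (Fin.append v₁ w₁) (Fin.append v₂ w₂) (hstable (l + t))
  have e₁ : (fun w => wlColor G (k + t) l (wlWrite k t (Fin.append v₁ w₁) t w)) =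
      fun w => wlColor G (k + t) l (Fin.append v₁ w) := by
    funext w; rw [wlWrite_append]
  have e₂ : (fun w => wlColor G (k + t) l (wlWrite k t (Fin.append v₂ w₂) t w)) =
      fun w => wlColor G (k + t) l (Fin.append v₂ w) := by
    funext w; rw [wlWrite_append]
  rw [e₁, e₂] at key
  exact key
end

section
/- For all k ≥ 2 and t ≥ 1: (k,t)-FWL is at most as powerful as (k,t+1)-FWL, and (k,t)-FWL is at most as powerful as (k+1,t)-FWL. Moreover, for the first comparison the following pointwise statement holds: for any colored graphs G, H, any v₁∈V(G)^k, v₂∈V(H)^k, and every iteration l ≥ 0, C^l_{k(t+1)fwl}(v₁) = C^l_{k(t+1)fwl}(v₂) implies C^l_{ktfwl}(v₁) = C^l_{ktfwl}(v₂). -/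
/-!
Common formalization of colored graphs, the k-dimensional Weisfeiler-Lehman (WL) test,
the (k,t)-dimensional Folklore WL test (k,t)-FWL and its extension (k,t)-FWL+, together
with the various specific refinement procedures (δ-k-LWL, GraphSNN, edge-based subgraph
refinement, KP-GNN, GDGNN, SLFWL(2), N²-FWL).

Convention: all colorings are formalized as explicitly-valued nested data (an injective
HASH is the identity).  "The stable colors (resp. color histograms) are equal" is rendered
as "the colors (resp. color histograms) at every iteration l are equal"; since the colors
at iteration l determine those at every earlier iteration and the partitions stabilize on
finite graphs, this is equivalent to equality of the stable colors.
-/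

open Finset

noncomputable section

variable {C : Type}

section Stmt10Aux

open List

variable {α β γ V W : Type} {A B : Type}


/-! #### List lemmas -/

theorem sublistsLen_map' (f : α → β) : ∀ (l : List α) (n : ℕ),
    List.sublistsLen n (l.map f) = (List.sublistsLen n l).map (List.map f)
  | [], 0 => by simp
  | [], _ + 1 => by simp
  | a :: l, 0 => by simp
  | a :: l, n + 1 => by
      rw [List.map_cons, List.sublistsLen_succ_cons, List.sublistsLen_succ_cons,
        List.map_append, sublistsLen_map' f l (n + 1), sublistsLen_map' f l n,
        List.map_map, List.map_map]
      rfl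

theorem filter_sublistsLen_append [DecidableEq α] (a : α) :
    ∀ (l : List α), a ∉ l → ∀ m : ℕ,
      (List.sublistsLen m (l ++ [a])).filter (fun s => decide (a ∉ s))
        = List.sublistsLen m l
  | [], _, 0 => by simp
  | [], _, m + 1 => by
      cases m <;>
        simp [List.sublistsLen_succ_cons, List.sublistsLen_succ_nil,
          List.sublistsLen_zero, List.filter]
  | b :: l, h, 0 => by simp
  | b :: l, h, m + 1 => by
      have hb : a ≠ b := fun hab => h (by simp [hab])
      have hl : a ∉ l := fun hal => h (by simp [hal])
      rw [List.cons_append, List.sublistsLen_succ_cons, List.filter_append,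
        List.filter_map, List.sublistsLen_succ_cons]
      congr 1
      · exact filter_sublistsLen_append a l hl (m + 1)
      · rw [show ((fun s => decide (a ∉ s)) ∘ List.cons b) = fun s => decide (a ∉ s) by
            funext s; simp [hb]]
        rw [filter_sublistsLen_append a l hl m]

theorem zip_self_filter_map (g : α → β) (p : α → Bool) :
    ∀ T : List α,
      (((T.zip (T.map g)).filter (fun q => p q.1)).map Prod.snd) = (T.filter p).map g
  | [] => rfl
  | a :: T => by
      rw [List.map_cons, List.zip_cons_cons, List.filter_cons, List.filter_cons]
      cases h : p a <;> simp [h, zip_self_filter_map g p T]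

theorem filter_flatMap' (p : β → Bool) (f : α → List β) :
    ∀ l : List α, (l.flatMap f).filter p = l.flatMap (fun a => (f a).filter p)
  | [] => rfl
  | a :: l => by
      rw [List.flatMap_cons, List.flatMap_cons, List.filter_append,
        filter_flatMap' p f l]

theorem flatMap_congr_mem {f g : α → List β} :
    ∀ {l : List α}, (∀ x ∈ l, f x = g x) → l.flatMap f = l.flatMap g
  | [], _ => rfl
  | a :: l, h => by
      rw [List.flatMap_cons, List.flatMap_cons, h a (by simp),
        flatMap_congr_mem (fun x hx => h x (by simp [hx]))]

theorem flatMap_filter_eq (p : α → Bool) (f : α → List β) :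
    ∀ l : List α, (l.filter p).flatMap f
      = l.flatMap (fun a => if p a then f a else [])
  | [] => rfl
  | a :: l => by
      rw [List.filter_cons, List.flatMap_cons]
      cases h : p a <;>
        simp [h, flatMap_filter_eq p f l]

theorem exists_pair_mem_zip :
    ∀ (l₁ : List α) (l₂ : List β), l₂.length ≤ l₁.length → ∀ x ∈ l₂,
      ∃ i, (i, x) ∈ l₁.zip l₂
  | _, [], _, x, hx => absurd hx List.not_mem_nil
  | [], y :: l₂, h, x, hx => by simp at h
  | a :: l₁, y :: l₂, h, x, hx => by
      rcases List.mem_cons.1 hx with rfl | hx'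
      · exact ⟨a, by simp⟩
      · rcases exists_pair_mem_zip l₁ l₂ (by simpa using h) x hx' with ⟨i, hi⟩
        exact ⟨i, List.mem_cons_of_mem _ hi⟩

/-! #### replaceList lemmas -/

variable {k k' t : ℕ}

theorem comp_replaceList (g : V → W) (v : Fin k → V) :
    ∀ ps : List (Fin k × V),
      g ∘ replaceList v ps = replaceList (g ∘ v) (ps.map (Prod.map id g))
  | [] => rfl
  | p :: ps => by
      simp only [replaceList, List.map_cons, Function.comp_update,
        comp_replaceList g v ps]
      rfl

theorem replaceList_not_mem (v : Fin k → V) :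
    ∀ (ps : List (Fin k × V)) (i : Fin k), i ∉ ps.map Prod.fst →
      replaceList v ps i = v i
  | [], _, _ => rfl
  | p :: ps, i, h => by
      have h1 : i ≠ p.1 := fun hi => h (by simp [hi])
      have h2 : i ∉ ps.map Prod.fst := fun hi => h (by simp [hi])
      rw [replaceList, Function.update_of_ne h1, replaceList_not_mem v ps i h2]

theorem replaceList_mem_snd (v : Fin k → V) :
    ∀ (ps : List (Fin k × V)) (i : Fin k), i ∈ ps.map Prod.fst →
      replaceList v ps i ∈ ps.map Prod.snd
  | p :: ps, i, h => by
      by_cases hi : i = p.1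
      · subst hi
        rw [replaceList, Function.update_self]
        simp
      · have h2 : i ∈ ps.map Prod.fst := by
          rcases List.mem_cons.1 h with h' | h'
          · exact absurd h' hi
          · exact h'
        rw [replaceList, Function.update_of_ne hi]
        simpa using Or.inr (replaceList_mem_snd v ps i h2)

theorem replaceList_get (v : Fin k → V) :
    ∀ (ps : List (Fin k × V)), (ps.map Prod.fst).Nodup → ∀ p ∈ ps,
      replaceList v ps p.1 = p.2
  | q :: ps, hnd, p, hp => by
      rcases List.mem_cons.1 hp with rfl | hp'
      · rw [replaceList, Function.update_self]
      · have hnd' : q.1 ∉ ps.map Prod.fst ∧ (ps.map Prod.fst).Nodup := by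
          rw [List.map_cons] at hnd; exact List.nodup_cons.1 hnd
        have hne : p.1 ≠ q.1 := by
          intro h
          exact hnd'.1 (h ▸ List.mem_map_of_mem (f := Prod.fst) hp')
        rw [replaceList, Function.update_of_ne hne, replaceList_get v ps hnd'.2 p hp']

theorem replaceList_or (v : Fin k → V) :
    ∀ (ps : List (Fin k × V)) (i : Fin k),
      replaceList v ps i = v i ∨ replaceList v ps i ∈ ps.map Prod.snd
  | [], i => Or.inl rfl
  | p :: ps, i => by
      by_cases hi : i = p.1
      · subst hi
        rw [replaceList, Function.update_self]
        exact Or.inr (by simp)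
      · rw [replaceList, Function.update_of_ne hi]
        rcases replaceList_or v ps i with h | h
        · exact Or.inl h
        · exact Or.inr (by simpa using Or.inr h)

theorem replaceList_comp_inj {φ : Fin k → Fin k'} (hφ : Function.Injective φ)
    (v : Fin k' → V) :
    ∀ ps : List (Fin k × V),
      replaceList v (ps.map (Prod.map φ id)) ∘ φ = replaceList (v ∘ φ) ps
  | [] => rfl
  | p :: ps => by
      funext j
      simp only [replaceList, List.map_cons, Function.comp_apply]
      by_cases hj : j = p.1
      · subst hj
        rw [show (Prod.map φ id p) = (φ p.1, p.2) from rfl]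
        simp [Function.update_self]
      · rw [show (Prod.map φ id p) = (φ p.1, p.2) from rfl]
        rw [Function.update_of_ne (by simpa using hφ.ne hj),
          Function.update_of_ne hj]
        exact congrFun (replaceList_comp_inj hφ v ps) j
theorem zip_filter_fst_map {α β : Type} (g : α → β) (p : α × β → Bool) :
    ∀ T : List α,
      ((T.zip (T.map g)).filter p).map Prod.snd
        = (T.filter (fun a => p (a, g a))).map g
  | [] => rfl
  | a :: T => by
      rw [List.map_cons, List.zip_cons_cons, List.filter_cons, List.filter_cons]
      cases h : p (a, g a) <;> simp [h, zip_filter_fst_map g p T]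
/-! #### The template tuple list and its filtered forms -/

/-- The abstract template of `nbhdTuple`. -/
def tmpl (k t : ℕ) : List (Fin k → (Fin k ⊕ Fin t)) :=
  nbhdTuple k t Sum.inl Sum.inr

theorem nbhdTuple_eq_map (k t : ℕ) (v : Fin k → V) (w : Fin t → V) :
    nbhdTuple k t v w = (tmpl k t).map (fun f => Sum.elim v w ∘ f) := by
  unfold tmpl nbhdTuple
  rw [List.map_flatMap]
  congr 1
  funext m
  rw [List.map_flatMap]
  congr 1
  funext ws
  rw [List.map_map]
  congr 1
  funext js
  show replaceList v (js.zip (ws.map w)) = Sum.elim v w ∘ replaceList Sum.inl (js.zip (ws.map Sum.inr))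
  rw [comp_replaceList, Sum.elim_comp_inl]
  congr 1
  rw [← List.zip_map_right, List.map_map]
  rfl

/-- The key combinatorial lemma for the comparison of `(k,t)`-FWL with `(k,t+1)`-FWL. -/
theorem tmpl_filter_T (k t : ℕ) (v : Fin k → V) (w : Fin t → V) (wl : V) :
    ((tmpl k (t + 1)).filter
        (fun f => decide (∀ j, f j ≠ Sum.inr (Fin.last t)))).map
      (fun f => Sum.elim v (Fin.snoc w wl) ∘ f) = nbhdTuple k t v w := by
  set p : (Fin k → Fin k ⊕ Fin (t + 1)) → Bool :=
    fun f => decide (∀ j, f j ≠ Sum.inr (Fin.last t)) with hp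
  set g : (Fin k → Fin k ⊕ Fin (t + 1)) → (Fin k → V) :=
    fun f => Sum.elim v (Fin.snoc w wl) ∘ f with hg
  show (((tmpl k (t+1)).filter p).map g) = _
  unfold tmpl nbhdTuple
  rw [filter_flatMap', List.map_flatMap]
  have hblock : ∀ m : ℕ,
      ((((List.finRange (t+1)).sublistsLen m).flatMap fun ws =>
          ((List.finRange k).sublistsLen m).map fun js =>
            replaceList Sum.inl (js.zip (ws.map Sum.inr))).filter p).map g
      = ((List.finRange t).sublistsLen m).flatMap fun ws =>
          ((List.finRange k).sublistsLen m).map fun js =>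
            replaceList v (js.zip (ws.map w)) := by
    intro m
    rw [filter_flatMap', List.map_flatMap]
    have hin : ∀ ws ∈ (List.finRange (t+1)).sublistsLen m,
        ((((List.finRange k).sublistsLen m).map fun js =>
            replaceList Sum.inl (js.zip (ws.map Sum.inr))).filter p).map g
        = if decide (Fin.last t ∉ ws) then
            (((List.finRange k).sublistsLen m).map fun js =>
              g (replaceList Sum.inl (js.zip (ws.map Sum.inr)))) else [] := by
      intro ws hws
      obtain ⟨hwssub, hwslen⟩ := List.mem_sublistsLen.1 hws
      by_cases hlast : Fin.last t ∈ ws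
      · rw [if_neg (by simp [hlast])]
        have hall : ∀ x ∈ ((List.finRange k).sublistsLen m).map
            (fun js => replaceList Sum.inl (js.zip (ws.map Sum.inr))), ¬ p x = true := by
          intro x hx
          rcases List.mem_map.1 hx with ⟨js, hjs, rfl⟩
          obtain ⟨hjssub, hjslen⟩ := List.mem_sublistsLen.1 hjs
          have hlen : (ws.map (Sum.inr : Fin (t+1) → Fin k ⊕ Fin (t+1))).length
              ≤ js.length := by simp [hjslen, hwslen]
          have hlen' : js.length
              ≤ (ws.map (Sum.inr : Fin (t+1) → Fin k ⊕ Fin (t+1))).length := by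
            simp [hjslen, hwslen]
          obtain ⟨i, hi⟩ := exists_pair_mem_zip js _ hlen (Sum.inr (Fin.last t))
            (List.mem_map_of_mem hlast)
          have hnd : ((js.zip (ws.map (Sum.inr : Fin (t+1) → Fin k ⊕ Fin (t+1)))).map
              Prod.fst).Nodup := by
            rw [List.map_fst_zip hlen']
            exact hjssub.nodup (List.nodup_finRange k)
          have heq := replaceList_get Sum.inl _ hnd _ hi
          simp only [hp, decide_eq_true_eq]
          push_neg
          exact ⟨i, heq⟩
        rw [List.filter_eq_nil_iff.2 hall, List.map_nil]
      · rw [if_pos (by simpa using hlast)]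
        have hall : ∀ x ∈ ((List.finRange k).sublistsLen m).map
            (fun js => replaceList Sum.inl (js.zip (ws.map Sum.inr))), p x = true := by
          intro x hx
          rcases List.mem_map.1 hx with ⟨js, hjs, rfl⟩
          obtain ⟨hjssub, hjslen⟩ := List.mem_sublistsLen.1 hjs
          have hlen : (ws.map (Sum.inr : Fin (t+1) → Fin k ⊕ Fin (t+1))).length
              ≤ js.length := by simp [hjslen, hwslen]
          simp only [hp, decide_eq_true_eq]
          intro j
          rcases replaceList_or Sum.inl
            (js.zip (ws.map (Sum.inr : Fin (t+1) → Fin k ⊕ Fin (t+1)))) j with h | h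
          · rw [h]; simp
          · rw [List.map_snd_zip hlen] at h
            rcases List.mem_map.1 h with ⟨x', hxws, hxe⟩
            rw [← hxe]
            simp only [ne_eq, Sum.inr.injEq]
            rintro rfl
            exact hlast hxws
        rw [List.filter_eq_self.2 hall, List.map_map]
        rfl
    rw [flatMap_congr_mem hin,
      ← flatMap_filter_eq (fun ws : List (Fin (t+1)) => decide (Fin.last t ∉ ws))
        (fun ws : List (Fin (t+1)) => ((List.finRange k).sublistsLen m).map fun js =>
          g (replaceList Sum.inl (js.zip (ws.map Sum.inr))))]
    have hfilter : ((List.finRange (t+1)).sublistsLen m).filter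
        (fun ws => decide (Fin.last t ∉ ws))
        = ((List.finRange t).sublistsLen m).map (List.map Fin.castSucc) := by
      rw [List.finRange_succ_last, filter_sublistsLen_append, sublistsLen_map']
      intro h
      rcases List.mem_map.1 h with ⟨i, _, hie⟩
      exact absurd hie (Fin.castSucc_lt_last i).ne
    rw [hfilter, List.flatMap_map]
    apply flatMap_congr_mem
    intro ws _
    apply List.map_congr_left
    intro js _
    show g (replaceList Sum.inl (js.zip ((ws.map Fin.castSucc).map Sum.inr)))
      = replaceList v (js.zip (ws.map w))
    rw [hg]
    show Sum.elim v (Fin.snoc w wl) ∘ replaceList Sum.inl _ = _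
    rw [comp_replaceList, Sum.elim_comp_inl]
    congr 1
    rw [← List.zip_map_right, List.map_map, List.map_map]
    congr 1
    refine List.map_congr_left fun i _ => ?_
    simp [Fin.snoc_castSucc]
  rcases le_or_gt k t with hkt | hkt
  · rw [min_eq_left hkt, min_eq_left (by omega)]
    exact flatMap_congr_mem fun m _ => hblock m
  · rw [min_eq_right (by omega), min_eq_right (by omega)]
    rw [List.range_succ (n := t+1), List.flatMap_append]
    rw [show ([t+1] : List ℕ).flatMap (fun m =>
        ((((List.finRange (t+1)).sublistsLen m).flatMap fun ws =>
          ((List.finRange k).sublistsLen m).map fun js =>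
            replaceList Sum.inl (js.zip (ws.map Sum.inr))).filter p).map g) = [] by
      rw [List.flatMap_cons, List.flatMap_nil, List.append_nil, hblock (t+1),
        List.sublistsLen_of_length_lt (l := List.finRange t) (by simp), List.flatMap_nil]]
    rw [List.append_nil]
    exact flatMap_congr_mem fun m _ => hblock m

/-- The key combinatorial lemma for the comparison of `(k,t)`-FWL with `(k+1,t)`-FWL. -/
theorem tmpl_filter_K (k t : ℕ) (v : Fin (k + 1) → V) (w : Fin t → V) :
    ((tmpl (k + 1) t).filter
        (fun f => decide (f (Fin.last k) = Sum.inl (Fin.last k)))).map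
      (fun f => (Sum.elim v w ∘ f) ∘ Fin.castSucc) = nbhdTuple k t (v ∘ Fin.castSucc) w := by
  set p : (Fin (k+1) → Fin (k+1) ⊕ Fin t) → Bool :=
    fun f => decide (f (Fin.last k) = Sum.inl (Fin.last k)) with hp
  set g : (Fin (k+1) → Fin (k+1) ⊕ Fin t) → (Fin k → V) :=
    fun f => (Sum.elim v w ∘ f) ∘ Fin.castSucc with hg
  show (((tmpl (k+1) t).filter p).map g) = _
  unfold tmpl nbhdTuple
  rw [filter_flatMap', List.map_flatMap]
  have hblock : ∀ m : ℕ,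
      ((((List.finRange t).sublistsLen m).flatMap fun ws =>
          ((List.finRange (k+1)).sublistsLen m).map fun js =>
            replaceList Sum.inl (js.zip (ws.map Sum.inr))).filter p).map g
      = ((List.finRange t).sublistsLen m).flatMap fun ws =>
          ((List.finRange k).sublistsLen m).map fun js =>
            replaceList (v ∘ Fin.castSucc) (js.zip (ws.map w)) := by
    intro m
    rw [filter_flatMap', List.map_flatMap]
    apply flatMap_congr_mem
    intro ws hws
    obtain ⟨hwssub, hwslen⟩ := List.mem_sublistsLen.1 hws
    rw [List.filter_map]
    have hcongr : ((List.finRange (k+1)).sublistsLen m).filter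
          (p ∘ fun js => replaceList Sum.inl (js.zip (ws.map Sum.inr)))
        = ((List.finRange (k+1)).sublistsLen m).filter
          (fun js => decide (Fin.last k ∉ js)) := by
      apply List.filter_congr
      intro js hjs
      obtain ⟨hjssub, hjslen⟩ := List.mem_sublistsLen.1 hjs
      have hlen : (ws.map (Sum.inr : Fin t → Fin (k+1) ⊕ Fin t)).length ≤ js.length := by
        simp [hjslen, hwslen]
      have hlen' : js.length
          ≤ (ws.map (Sum.inr : Fin t → Fin (k+1) ⊕ Fin t)).length := by
        simp [hjslen, hwslen]
      by_cases hlast : Fin.last k ∈ js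
      · have hmem : Fin.last k ∈ (js.zip (ws.map
            (Sum.inr : Fin t → Fin (k+1) ⊕ Fin t))).map Prod.fst := by
          rw [List.map_fst_zip hlen']; exact hlast
        have hv := replaceList_mem_snd Sum.inl _ _ hmem
        rw [List.map_snd_zip hlen] at hv
        rcases List.mem_map.1 hv with ⟨x, _, hxe⟩
        simp only [Function.comp_apply, hp]
        rw [← hxe]
        simp [hlast]
      · have hnm : Fin.last k ∉ (js.zip (ws.map
            (Sum.inr : Fin t → Fin (k+1) ⊕ Fin t))).map Prod.fst := by
          rw [List.map_fst_zip hlen']; exact hlast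
        have hv := replaceList_not_mem Sum.inl _ _ hnm
        simp only [Function.comp_apply, hp]
        rw [hv]
        simp [hlast]
    rw [hcongr]
    have hfilter : ((List.finRange (k+1)).sublistsLen m).filter
        (fun js => decide (Fin.last k ∉ js))
        = ((List.finRange k).sublistsLen m).map (List.map Fin.castSucc) := by
      rw [List.finRange_succ_last, filter_sublistsLen_append, sublistsLen_map']
      intro h
      rcases List.mem_map.1 h with ⟨i, _, hie⟩
      exact absurd hie (Fin.castSucc_lt_last i).ne
    rw [hfilter, List.map_map, List.map_map]
    apply List.map_congr_left
    intro js _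
    show g (replaceList Sum.inl ((js.map Fin.castSucc).zip (ws.map Sum.inr)))
      = replaceList (v ∘ Fin.castSucc) (js.zip (ws.map w))
    rw [hg]
    show (Sum.elim v w ∘ replaceList Sum.inl _) ∘ Fin.castSucc = _
    rw [comp_replaceList, Sum.elim_comp_inl]
    rw [← List.zip_map_right, List.map_map,
      show (Sum.elim v w ∘ Sum.inr : Fin t → V) = w from rfl]
    rw [List.zip_map_left, replaceList_comp_inj (Fin.castSucc_injective k)]
  rcases le_or_gt t k with htk | htk
  · rw [min_eq_right htk, min_eq_right (by omega)]
    exact flatMap_congr_mem fun m _ => hblock m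
  · rw [min_eq_left (by omega), min_eq_left (by omega)]
    rw [List.range_succ (n := k+1), List.flatMap_append]
    rw [show ([k+1] : List ℕ).flatMap (fun m =>
        ((((List.finRange t).sublistsLen m).flatMap fun ws =>
          ((List.finRange (k+1)).sublistsLen m).map fun js =>
            replaceList Sum.inl (js.zip (ws.map Sum.inr))).filter p).map g) = [] by
      rw [List.flatMap_cons, List.flatMap_nil, List.append_nil, hblock (k+1)]
      apply List.flatMap_eq_nil_iff.2
      intro ws _
      rw [List.sublistsLen_of_length_lt (by simp), List.map_nil]]
    rw [List.append_nil]
    exact flatMap_congr_mem fun m _ => hblock m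
/-! #### Hierarchical multiset machinery -/

def hmsMap {α β : Type} (f : α → β) : ∀ t : ℕ, HMS α t → HMS β t
  | 0, x => f x
  | t + 1, s => Multiset.map (hmsMap f t) s

theorem hmsMap_hms {α β V : Type} (f : α → β) :
    ∀ (t : ℕ) (S : Fin t → Finset V) (x : (Fin t → V) → α),
      hmsMap f t (hms t S x) = hms t S (fun w => f (x w))
  | 0, _, _ => rfl
  | t + 1, S, x => by
      show Multiset.map (hmsMap f t) (hms (t + 1) S x) = _
      rw [show hms (t + 1) S x = (S (Fin.last t)).val.map fun wl =>
          hms t (fun i => S i.castSucc) fun w => x (Fin.snoc w wl) from rfl]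
      rw [show hms (t + 1) S (fun w => f (x w)) = (S (Fin.last t)).val.map fun wl =>
          hms t (fun i => S i.castSucc) fun w => f (x (Fin.snoc w wl)) from rfl]
      rw [Multiset.map_map]
      refine Multiset.map_congr rfl fun wl _ => ?_
      exact hmsMap_hms f t _ _

def pickD {α : Type} (s : Multiset α) (d : α) : α := s.toList.headD d

theorem pickD_mem {α : Type} {s : Multiset α} (h : s ≠ 0) (d : α) : pickD s d ∈ s := by
  have hl : s.toList ≠ [] := fun hh => h (Multiset.toList_eq_nil.1 hh)
  rw [← Multiset.mem_toList]
  unfold pickD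
  cases hc : s.toList with
  | nil => exact absurd hc hl
  | cons a l => simp [hc]

def hmsJunk {α : Type} : ∀ t : ℕ, HMS (List α) t
  | 0 => []
  | _ + 1 => (0 : Multiset _)

/-! #### The selection functions and their action on neighborhood tuples -/

def selT (k t : ℕ) {α : Type} (L : List α) : List α :=
  (((tmpl k (t + 1)).zip L).filter
    (fun q => decide (∀ j, q.1 j ≠ Sum.inr (Fin.last t)))).map Prod.snd

def selK (k t : ℕ) {α : Type} (L : List α) : List α :=
  (((tmpl (k + 1) t).zip L).filter
    (fun q => decide (q.1 (Fin.last k) = Sum.inl (Fin.last k)))).map Prod.snd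

theorem selT_spec {α : Type} (k t : ℕ) (g : (Fin k → Fin k ⊕ Fin (t + 1)) → α) :
    selT k t ((tmpl k (t + 1)).map g)
      = ((tmpl k (t + 1)).filter
          (fun f => decide (∀ j, f j ≠ Sum.inr (Fin.last t)))).map g := by
  unfold selT
  rw [zip_filter_fst_map g _ (tmpl k (t + 1))]

theorem selK_spec {α : Type} (k t : ℕ) (g : (Fin (k + 1) → Fin (k + 1) ⊕ Fin t) → α) :
    selK k t ((tmpl (k + 1) t).map g)
      = ((tmpl (k + 1) t).filter
          (fun f => decide (f (Fin.last k) = Sum.inl (Fin.last k)))).map g := by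
  unfold selK
  rw [zip_filter_fst_map g _ (tmpl (k + 1) t)]

theorem selT_apply {V α β : Type} (k t : ℕ) (v : Fin k → V) (w : Fin t → V) (wl : V)
    (c : (Fin k → V) → α) (P : α → β) (ct : (Fin k → V) → β)
    (hc : ∀ u, P (c u) = ct u) :
    (selT k t ((nbhdTuple k (t + 1) v (Fin.snoc w wl)).map c)).map P
      = (nbhdTuple k t v w).map ct := by
  rw [nbhdTuple_eq_map k (t + 1) v (Fin.snoc w wl), List.map_map, selT_spec, List.map_map]
  rw [show (P ∘ (c ∘ fun f => Sum.elim v (Fin.snoc w wl) ∘ f))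
      = (ct ∘ fun f => Sum.elim v (Fin.snoc w wl) ∘ f) from funext fun f => hc _]
  rw [← List.map_map, tmpl_filter_T]

theorem selK_apply {V α β : Type} (k t : ℕ) (v : Fin (k + 1) → V) (w : Fin t → V)
    (c : (Fin (k + 1) → V) → α) (P : α → β) (ck : (Fin k → V) → β)
    (hc : ∀ u, P (c u) = ck (u ∘ Fin.castSucc)) :
    (selK k t ((nbhdTuple (k + 1) t v w).map c)).map P
      = (nbhdTuple k t (v ∘ Fin.castSucc) w).map ck := by
  rw [nbhdTuple_eq_map (k + 1) t v w, List.map_map, selK_spec, List.map_map]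
  rw [show (P ∘ (c ∘ fun f => Sum.elim v w ∘ f))
      = (ck ∘ fun f => (Sum.elim v w ∘ f) ∘ Fin.castSucc) from funext fun f => hc _]
  rw [← List.map_map, tmpl_filter_K]
/-! #### The color projections -/

def Fproj {C : Type} (k t : ℕ) : ∀ l : ℕ, FWLColor C k (t + 1) l → FWLColor C k t l
  | 0, c => c
  | l + 1, c =>
      (Fproj k t l c.1,
        hmsMap (fun L => (selT k t L).map (Fproj k t l)) t (pickD c.2 (hmsJunk t)))

def isoRestrict {C : Type} {k : ℕ} (c : IsoType C (k + 1)) : IsoType C k :=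
  (fun i => c.1 i.castSucc, fun i j => c.2.1 i.castSucc j.castSucc,
    fun i j => c.2.2 i.castSucc j.castSucc)

def Pproj {C : Type} (k t : ℕ) : ∀ l : ℕ, FWLColor C (k + 1) t l → FWLColor C k t l
  | 0, c => isoRestrict c
  | l + 1, c =>
      (Pproj k t l c.1, hmsMap (fun L => (selK k t L).map (Pproj k t l)) t c.2)

theorem fwlColor_succ {C : Type} (G : ColoredGraph C) (k t l : ℕ) (v : Fin k → G.V) :
    fwlColor G k t (l + 1) v = (fwlColor G k t l v,
      hms t (fun _ => Finset.univ) fun w =>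
        (nbhdTuple k t v w).map (fwlColor G k t l)) := rfl

theorem hms_univ_succ {V α : Type} [Fintype V] [DecidableEq V] (t : ℕ)
    (x : (Fin (t + 1) → V) → α) :
    hms (t + 1) (fun _ => (Finset.univ : Finset V)) x
      = (Finset.univ : Finset V).val.map fun wl =>
          hms t (fun _ => Finset.univ) fun w => x (Fin.snoc w wl) := rfl

theorem Fproj_correct {C : Type} (k t : ℕ) (G : ColoredGraph C) (hG : Nonempty G.V) :
    ∀ (l : ℕ) (v : Fin k → G.V),
      Fproj k t l (fwlColor G k (t + 1) l v) = fwlColor G k t l v := by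
  intro l
  induction l with
  | zero => intro v; rfl
  | succ l ih =>
      intro v
      rw [fwlColor_succ G k (t + 1) l v, fwlColor_succ G k t l v]
      simp only [Fproj]
      rw [hms_univ_succ]
      have hne : ((Finset.univ : Finset G.V).val.map fun wl =>
          hms t (fun _ => (Finset.univ : Finset G.V)) fun w =>
            ((nbhdTuple k (t + 1) v (Fin.snoc w wl)).map (fwlColor G k (t + 1) l)))
          ≠ 0 := by
        simp only [ne_eq, Multiset.map_eq_zero, Finset.val_eq_zero]
        exact Finset.univ_nonempty.ne_empty
      have hpick := pickD_mem hne (hmsJunk t)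
      obtain ⟨wl, -, hwl⟩ := Multiset.mem_map.1 hpick
      congr 1
      · exact ih v
      · rw [← hwl, hmsMap_hms]
        congr 1
        funext w
        exact selT_apply k t v w wl (fwlColor G k (t + 1) l) (Fproj k t l)
          (fwlColor G k t l) ih

theorem Pproj_correct {C : Type} (k t : ℕ) (G : ColoredGraph C) :
    ∀ (l : ℕ) (v : Fin (k + 1) → G.V),
      Pproj k t l (fwlColor G (k + 1) t l v) = fwlColor G k t l (v ∘ Fin.castSucc) := by
  intro l
  induction l with
  | zero => intro v; rfl
  | succ l ih =>
      intro v
      rw [fwlColor_succ G (k + 1) t l v, fwlColor_succ G k t l (v ∘ Fin.castSucc)]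
      simp only [Pproj]
      congr 1
      · exact ih v
      · rw [hmsMap_hms]
        congr 1
        funext w
        exact selK_apply k t v w (fwlColor G (k + 1) t l) (Pproj k t l)
          (fwlColor G k t l) ih

/-! #### Multiset counting helpers -/

theorem count_nsmul_cancel {γ : Type} {n : ℕ} (hn : n ≠ 0) {s u : Multiset γ}
    (h : n • s = n • u) : s = u := by
  classical
  ext a
  have hc := congrArg (Multiset.count a) h
  rw [Multiset.count_nsmul, Multiset.count_nsmul] at hc
  exact Nat.eq_of_mul_eq_mul_left (Nat.pos_of_ne_zero hn) hc

theorem msBindReplicate {A γ : Type} (n : ℕ) (f : A → γ) (s : Multiset A) :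
    (s.bind fun a => Multiset.replicate n (f a)) = n • s.map f := by
  refine Multiset.induction_on s (by simp) ?_
  intro a s ih
  rw [Multiset.cons_bind, ih, Multiset.map_cons, ← Multiset.singleton_add, nsmul_add,
    Multiset.nsmul_singleton]

theorem univ_prod_map_fst {A B γ : Type} [Fintype A] [Fintype B] (f : A → γ) :
    ((Finset.univ : Finset (A × B)).val).map (fun p => f p.1)
      = (Fintype.card B) • ((Finset.univ : Finset A).val.map f) := by
  rw [← Finset.univ_product_univ, Finset.product_val]
  rw [show ((Finset.univ.val : Multiset A) ×ˢ (Finset.univ.val : Multiset B))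
      = (Finset.univ.val : Multiset A).bind
          (fun a => (Finset.univ.val : Multiset B).map (Prod.mk a)) from rfl]
  rw [Multiset.map_bind]
  have hinner : ∀ a : A, Multiset.map (fun p : A × B => f p.1)
      (Multiset.map (Prod.mk a) (Finset.univ.val : Multiset B))
      = Multiset.replicate (Fintype.card B) (f a) := by
    intro a
    rw [Multiset.map_map]
    rw [show ((fun p : A × B => f p.1) ∘ Prod.mk a) = Function.const B (f a) from rfl]
    rw [Multiset.map_const]
    rfl
  rw [Multiset.bind_congr (fun a _ => hinner a), msBindReplicate]

def snocEquiv (k : ℕ) (V : Type) : (Fin (k + 1) → V) ≃ (Fin k → V) × V where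
  toFun v := (v ∘ Fin.castSucc, v (Fin.last k))
  invFun p := Fin.snoc p.1 p.2
  left_inv v := by
    funext i
    refine Fin.lastCases ?_ (fun j => ?_) i <;> simp
  right_inv p := by
    refine Prod.ext (funext fun i => ?_) ?_ <;> simp

theorem univ_val_map_equiv {X Y γ : Type} [Fintype X] [Fintype Y] (e : X ≃ Y)
    (f : Y → γ) :
    (Finset.univ : Finset X).val.map (fun x => f (e x))
      = (Finset.univ : Finset Y).val.map f := by
  have h1 : (Finset.univ : Finset X).val.map (⇑e) = (Finset.univ : Finset Y).val := by
    rw [show (Finset.univ : Finset X).val.map ⇑e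
        = (Finset.univ.map e.toEmbedding).val from rfl, Finset.map_univ_equiv]
  calc (Finset.univ : Finset X).val.map (fun x => f (e x))
      = ((Finset.univ : Finset X).val.map ⇑e).map f := by
        rw [Multiset.map_map]; rfl
    _ = (Finset.univ : Finset Y).val.map f := by rw [h1]

end Stmt10Aux

end

/-- For `k ≥ 2`, `t ≥ 1`: `(k,t)`-FWL is at most as powerful as
`(k,t+1)`-FWL and at most as powerful as `(k+1,t)`-FWL; moreover the first comparison
holds pointwise at every iteration. -/
theorem stmt_10 (k t : ℕ) (hk : 2 ≤ k) (ht : 1 ≤ t) :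
    (∀ (C : Type) (G H : ColoredGraph C),
        (∀ l, fwlHistogram G k (t + 1) l = fwlHistogram H k (t + 1) l) →
        ∀ l, fwlHistogram G k t l = fwlHistogram H k t l) ∧
    (∀ (C : Type) (G H : ColoredGraph C),
        (∀ l, fwlHistogram G (k + 1) t l = fwlHistogram H (k + 1) t l) →
        ∀ l, fwlHistogram G k t l = fwlHistogram H k t l) ∧
    (∀ (C : Type) (G H : ColoredGraph C) (v₁ : Fin k → G.V) (v₂ : Fin k → H.V) (l : ℕ),
        fwlColor G k (t + 1) l v₁ = fwlColor H k (t + 1) l v₂ →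
        fwlColor G k t l v₁ = fwlColor H k t l v₂) := by
  have key3 : ∀ (C : Type) (G H : ColoredGraph C) (v₁ : Fin k → G.V) (v₂ : Fin k → H.V)
      (l : ℕ), fwlColor G k (t + 1) l v₁ = fwlColor H k (t + 1) l v₂ →
      fwlColor G k t l v₁ = fwlColor H k t l v₂ := by
    intro C G H v₁ v₂ l h
    have hG : Nonempty G.V := ⟨v₁ ⟨0, by omega⟩⟩
    have hH : Nonempty H.V := ⟨v₂ ⟨0, by omega⟩⟩
    rw [← Fproj_correct k t G hG l v₁, ← Fproj_correct k t H hH l v₂, h]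
  refine ⟨?_, ?_, key3⟩
  · intro C G H hh l
    have hcardfun : Fintype.card (Fin k → G.V) = Fintype.card (Fin k → H.V) := by
      have h0 := congrArg Multiset.card (hh 0)
      simp only [fwlHistogram, Multiset.card_map] at h0
      exact h0
    have hcard : Fintype.card G.V = Fintype.card H.V := by
      rw [Fintype.card_fun, Fintype.card_fun, Fintype.card_fin] at hcardfun
      exact Nat.pow_left_injective (by omega) hcardfun
    rcases Nat.eq_zero_or_pos (Fintype.card G.V) with hzero | hpos
    · haveI hEG : IsEmpty G.V := Fintype.card_eq_zero_iff.1 hzero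
      haveI hEH : IsEmpty H.V := Fintype.card_eq_zero_iff.1 (by omega)
      haveI : IsEmpty (Fin k → G.V) := ⟨fun f => hEG.false (f ⟨0, by omega⟩)⟩
      haveI : IsEmpty (Fin k → H.V) := ⟨fun f => hEH.false (f ⟨0, by omega⟩)⟩
      simp only [fwlHistogram]
      rw [Finset.univ_eq_empty, Finset.univ_eq_empty]
      rfl
    · have hG : Nonempty G.V := Fintype.card_pos_iff.1 hpos
      have hH : Nonempty H.V := Fintype.card_pos_iff.1 (by omega)
      have e1 : fwlHistogram G k t l = (fwlHistogram G k (t + 1) l).map (Fproj k t l) := by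
        simp only [fwlHistogram]
        rw [Multiset.map_map]
        exact (Multiset.map_congr rfl fun v _ => Fproj_correct k t G hG l v).symm
      have e2 : fwlHistogram H k t l = (fwlHistogram H k (t + 1) l).map (Fproj k t l) := by
        simp only [fwlHistogram]
        rw [Multiset.map_map]
        exact (Multiset.map_congr rfl fun v _ => Fproj_correct k t H hH l v).symm
      rw [e1, e2, hh l]
  · intro C G H hh l
    have hcardfun : Fintype.card (Fin (k + 1) → G.V)
        = Fintype.card (Fin (k + 1) → H.V) := by
      have h0 := congrArg Multiset.card (hh 0)
      simp only [fwlHistogram, Multiset.card_map] at h0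
      exact h0
    have hcard : Fintype.card G.V = Fintype.card H.V := by
      rw [Fintype.card_fun, Fintype.card_fun, Fintype.card_fin] at hcardfun
      exact Nat.pow_left_injective (by omega) hcardfun
    rcases Nat.eq_zero_or_pos (Fintype.card G.V) with hzero | hpos
    · haveI hEG : IsEmpty G.V := Fintype.card_eq_zero_iff.1 hzero
      haveI hEH : IsEmpty H.V := Fintype.card_eq_zero_iff.1 (by omega)
      haveI : IsEmpty (Fin k → G.V) := ⟨fun f => hEG.false (f ⟨0, by omega⟩)⟩
      haveI : IsEmpty (Fin k → H.V) := ⟨fun f => hEH.false (f ⟨0, by omega⟩)⟩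
      simp only [fwlHistogram]
      rw [Finset.univ_eq_empty, Finset.univ_eq_empty]
      rfl
    · have e1 : (fwlHistogram G (k + 1) t l).map (Pproj k t l)
          = (Fintype.card G.V) • fwlHistogram G k t l := by
        simp only [fwlHistogram]
        rw [Multiset.map_map]
        calc (Finset.univ.val.map
                ((Pproj k t l : FWLColor C (k+1) t l → FWLColor C k t l)
                  ∘ fwlColor G (k + 1) t l))
            = Finset.univ.val.map (fun v : Fin (k+1) → G.V =>
                fwlColor G k t l (v ∘ Fin.castSucc)) :=
              Multiset.map_congr rfl fun v _ => Pproj_correct k t G l v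
          _ = (Finset.univ : Finset ((Fin k → G.V) × G.V)).val.map
                (fun p => fwlColor G k t l p.1) := by
              rw [← univ_val_map_equiv (snocEquiv k G.V)
                (fun p => fwlColor G k t l p.1)]
              rfl
          _ = (Fintype.card G.V) • Finset.univ.val.map (fwlColor G k t l) :=
              univ_prod_map_fst _
      have e2 : (fwlHistogram H (k + 1) t l).map (Pproj k t l)
          = (Fintype.card H.V) • fwlHistogram H k t l := by
        simp only [fwlHistogram]
        rw [Multiset.map_map]
        calc (Finset.univ.val.map
                ((Pproj k t l : FWLColor C (k+1) t l → FWLColor C k t l)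
                  ∘ fwlColor H (k + 1) t l))
            = Finset.univ.val.map (fun v : Fin (k+1) → H.V =>
                fwlColor H k t l (v ∘ Fin.castSucc)) :=
              Multiset.map_congr rfl fun v _ => Pproj_correct k t H l v
          _ = (Finset.univ : Finset ((Fin k → H.V) × H.V)).val.map
                (fun p => fwlColor H k t l p.1) := by
              rw [← univ_val_map_equiv (snocEquiv k H.V)
                (fun p => fwlColor H k t l p.1)]
              rfl
          _ = (Fintype.card H.V) • Finset.univ.val.map (fwlColor H k t l) :=
              univ_prod_map_fst _
      have hmain := congrArg (Multiset.map (Pproj k t l)) (hh l)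
      rw [e1, e2, ← hcard] at hmain
      exact count_nsmul_cancel (by omega) hmain
end
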